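/- arXiv:2210.10035 — 13 statements merged into one kernel-verified Lean document; each statement's English description precedes it below -/
import Mathlib

section
/- Let β > 0 and 0 < δ < π/2. Let f : (0,δ) → ℝ be continuous and suppose that f(x)/sin^β(x) tends to a limit γ ∈ ℝ as x → 0⁺ (which in particular guarantees that the integral ∫₀^x f(τ)·cot(τ) dτ converges for x ∈ (0,δ)). If f(x) ≤ β·∫₀^x f(τ)·cot(τ) dτ for all x ∈ (0,δ), then f(x) ≤ γ·sin^β(x) for all x ∈ (0,δ). -/
open Real Set

lemma aux_sinpow_bound (β : ℝ) :
    ∃ K > (0:ℝ), ∀ τ ∈ Set.Ioc (0:ℝ) (π/2), Real.sin τ ^ (β-1) ≤ K * τ ^ (β-1) := by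
  by_cases h : 1 ≤ β
  · refine ⟨1, one_pos, fun τ hτ => ?_⟩
    rw [one_mul]
    exact Real.rpow_le_rpow (Real.sin_nonneg_of_nonneg_of_le_pi hτ.1.le
      (hτ.2.trans (by linarith [Real.pi_pos]))) (Real.sin_le hτ.1.le) (by linarith)
  · refine ⟨(2/π) ^ (β-1), Real.rpow_pos_of_pos (div_pos two_pos Real.pi_pos) _, fun τ hτ => ?_⟩
    rw [← Real.mul_rpow (div_pos two_pos Real.pi_pos).le hτ.1.le]
    exact Real.rpow_le_rpow_of_nonpos (mul_pos (div_pos two_pos Real.pi_pos) hτ.1)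
      (Real.mul_le_sin hτ.1.le hτ.2) (by linarith)

open MeasureTheory in
lemma aux_integrable {h : ℝ → ℝ} {x C β : ℝ} (hx : 0 < x) (hβ : 0 < β)
    (hcont : ContinuousOn h (Set.Ioc 0 x))
    (hbd : ∀ τ ∈ Set.Ioc (0:ℝ) x, |h τ| ≤ C * τ ^ (β-1)) :
    IntervalIntegrable h MeasureTheory.volume 0 x := by
  rw [intervalIntegrable_iff_integrableOn_Ioc_of_le hx.le]
  have hg : MeasureTheory.IntegrableOn (fun τ => C * τ ^ (β-1)) (Set.Ioc 0 x) := by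
    have := ((intervalIntegral.intervalIntegrable_rpow' (a := 0) (b := x) (r := β-1)
      (by linarith)).const_mul C)
    rwa [intervalIntegrable_iff_integrableOn_Ioc_of_le hx.le] at this
  refine hg.mono' (hcont.aestronglyMeasurable measurableSet_Ioc) ?_
  rw [MeasureTheory.ae_restrict_iff' measurableSet_Ioc]
  filter_upwards with τ hτ
  simpa [Real.norm_eq_abs] using hbd τ hτ

lemma aux_sinpow_cont (β : ℝ) (hβ : 0 < β) :
    Continuous (fun τ => Real.sin τ ^ β) := by
  rw [continuous_iff_continuousAt]
  intro τ
  exact (Real.continuousAt_rpow_const _ _ (Or.inr hβ.le)).comp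
    Real.continuous_sin.continuousAt

lemma aux_sin_integrable {β t : ℝ} (hβ : 0 < β) (ht : 0 < t) (ht2 : t ≤ Real.pi/2) :
    IntervalIntegrable (fun τ => Real.sin τ ^ (β-1) * Real.cos τ)
      MeasureTheory.volume 0 t := by
  obtain ⟨K, hK, hKb⟩ := aux_sinpow_bound β
  have hsinpos : ∀ τ ∈ Set.Ioc (0:ℝ) t, 0 < Real.sin τ := fun τ hτ =>
    Real.sin_pos_of_pos_of_lt_pi hτ.1 (lt_of_le_of_lt (hτ.2.trans ht2)
      (by linarith [Real.pi_pos]))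
  apply aux_integrable ht hβ
  · intro τ hτ
    exact (((Real.continuousAt_rpow_const _ _ (Or.inl (hsinpos τ hτ).ne')).comp
      Real.continuous_sin.continuousAt).mul Real.continuous_cos.continuousAt).continuousWithinAt
  · intro τ hτ
    have h1 : Real.sin τ ^ (β-1) ≤ K * τ ^ (β-1) := hKb τ ⟨hτ.1, hτ.2.trans ht2⟩
    have h2 : (0:ℝ) ≤ Real.sin τ ^ (β-1) := (Real.rpow_pos_of_pos (hsinpos τ hτ) _).le
    have h3 : |Real.cos τ| ≤ 1 := Real.abs_cos_le_one τ
    calc |Real.sin τ ^ (β-1) * Real.cos τ| = Real.sin τ ^ (β-1) * |Real.cos τ| := by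
          rw [abs_mul, abs_of_nonneg h2]
      _ ≤ Real.sin τ ^ (β-1) * 1 := by nlinarith
      _ ≤ K * τ ^ (β-1) := by rw [mul_one]; exact h1

lemma aux_sin_hasDeriv {β : ℝ} (hβ : 0 < β) {x : ℝ} (hx1 : 0 < x) (hx2 : x < Real.pi) :
    HasDerivAt (fun τ => Real.sin τ ^ β / β) (Real.sin x ^ (β-1) * Real.cos x) x := by
  have hs : Real.sin x ≠ 0 := (Real.sin_pos_of_pos_of_lt_pi hx1 hx2).ne'
  have h1 : HasDerivAt (fun τ => Real.sin τ ^ β)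
      ((β * Real.sin x ^ (β-1)) * Real.cos x) x :=
    (Real.hasDerivAt_rpow_const (Or.inl hs)).comp x (Real.hasDerivAt_sin x)
  have h2 := h1.div_const β
  convert h2 using 1
  · rfl
  · rfl
  field_simp

lemma aux_sin_integral {β t : ℝ} (hβ : 0 < β) (ht : 0 < t) (ht2 : t ≤ Real.pi/2) :
    ∫ τ in (0:ℝ)..t, Real.sin τ ^ (β-1) * Real.cos τ = Real.sin t ^ β / β := by
  have key := intervalIntegral.integral_eq_sub_of_hasDerivAt_of_le ht.le
    (f := fun τ => Real.sin τ ^ β / β)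
    (((aux_sinpow_cont β hβ).div_const β).continuousOn)
    (fun x hx => aux_sin_hasDeriv hβ hx.1 (lt_of_lt_of_le hx.2
      (ht2.trans (by linarith [Real.pi_pos]))))
    (aux_sin_integrable hβ ht ht2)
  rw [key]; rw [Real.sin_zero, Real.zero_rpow hβ.ne', zero_div, sub_zero]

lemma aux_bdd {δ γ : ℝ} {q : ℝ → ℝ} (hq : ContinuousOn q (Set.Ioo 0 δ))
    (hlim : Filter.Tendsto q (nhdsWithin 0 (Set.Ioi 0)) (nhds γ))
    {x : ℝ} (hx : x ∈ Set.Ioo 0 δ) :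
    ∃ C ≥ (0:ℝ), ∀ τ ∈ Set.Ioc (0:ℝ) x, |q τ| ≤ C := by
  have h1 : ∀ᶠ τ in nhdsWithin 0 (Set.Ioi 0), |q τ| < |γ| + 1 :=
    (hlim.abs).eventually_lt_const (by linarith [abs_nonneg γ])
  rw [Filter.eventually_iff, mem_nhdsGT_iff_exists_Ioo_subset] at h1
  obtain ⟨t₀, ht₀, hsub⟩ := h1
  have ht₀' : (0:ℝ) < t₀ := ht₀
  set a : ℝ := min (t₀/2) x with ha
  have ha0 : 0 < a := lt_min (by linarith) hx.1
  have hax : a ≤ x := min_le_right _ _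
  have hat : a < t₀ := lt_of_le_of_lt (min_le_left _ _) (by linarith)
  have hcomp : IsCompact (Set.Icc a x) := isCompact_Icc
  obtain ⟨M, hM⟩ := hcomp.exists_bound_of_continuousOn
    (hq.mono (fun τ hτ => ⟨lt_of_lt_of_le ha0 hτ.1, lt_of_le_of_lt hτ.2 hx.2⟩))
  refine ⟨max (|γ| + 1) ((|M|) + 1), le_trans (by positivity) (le_max_left _ _),
    fun τ hτ => ?_⟩
  rcases lt_or_ge τ a with hc | hc
  · exact le_trans (hsub ⟨hτ.1, lt_trans hc hat⟩).le (le_max_left _ _)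
  · refine le_trans ?_ (le_max_right _ _)
    have := hM τ ⟨hc, hτ.2⟩
    rw [Real.norm_eq_abs] at this
    calc |q τ| ≤ M := this
      _ ≤ |M| + 1 := by linarith [le_abs_self M]
/-- Grönwall-type comparison lemma: if `f x ≤ β ∫₀ˣ f τ cot τ dτ` on `(0, δ)` and
`f x / sin x ^ β → γ` as `x → 0⁺`, then `f x ≤ γ sin x ^ β` on `(0, δ)`. -/
theorem stmt_0 (β δ γ : ℝ) (hβ : 0 < β) (hδ0 : 0 < δ) (hδ : δ < Real.pi / 2)
    (f : ℝ → ℝ) (hf : ContinuousOn f (Set.Ioo 0 δ))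
    (hlim : Filter.Tendsto (fun x => f x / Real.sin x ^ β)
      (nhdsWithin 0 (Set.Ioi 0)) (nhds γ))
    (hineq : ∀ x ∈ Set.Ioo 0 δ, f x ≤ β * ∫ τ in (0:ℝ)..x, f τ * Real.cot τ) :
    ∀ x ∈ Set.Ioo 0 δ, f x ≤ γ * Real.sin x ^ β := by
  have hpi := Real.pi_pos
  set q : ℝ → ℝ := fun τ => f τ / Real.sin τ ^ β with hq_def
  have hsin : ∀ τ ∈ Set.Ioo (0:ℝ) δ, 0 < Real.sin τ := fun τ hτ =>
    Real.sin_pos_of_pos_of_lt_pi hτ.1 (by linarith [hτ.2])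
  have hcos : ∀ τ ∈ Set.Ioo (0:ℝ) δ, 0 < Real.cos τ := fun τ hτ =>
    Real.cos_pos_of_mem_Ioo ⟨by linarith [hτ.1], by linarith [hτ.2]⟩
  have hq_cont : ContinuousOn q (Set.Ioo 0 δ) :=
    hf.div ((aux_sinpow_cont β hβ).continuousOn)
      (fun τ hτ => (Real.rpow_pos_of_pos (hsin τ hτ) β).ne')
  have h_eq : ∀ τ ∈ Set.Ioo (0:ℝ) δ,
      f τ * Real.cot τ = q τ * (Real.sin τ ^ (β-1) * Real.cos τ) := by
    intro τ hτ
    have hs := (hsin τ hτ).ne'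
    have hsβ := (Real.rpow_pos_of_pos (hsin τ hτ) β).ne'
    rw [Real.cot_eq_cos_div_sin, hq_def, Real.rpow_sub_one hs]
    field_simp
  have hcont_h : ContinuousOn (fun τ => f τ * Real.cot τ) (Set.Ioo 0 δ) := by
    have hcot : ContinuousOn Real.cot (Set.Ioo 0 δ) :=
      (ContinuousOn.div Real.continuous_cos.continuousOn Real.continuous_sin.continuousOn
        (fun τ hτ => (hsin τ hτ).ne')).congr (fun τ _ => Real.cot_eq_cos_div_sin τ)
    exact hf.mul hcot
  have hint : ∀ x ∈ Set.Ioo (0:ℝ) δ,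
      IntervalIntegrable (fun τ => f τ * Real.cot τ) MeasureTheory.volume 0 x := by
    intro x hx
    obtain ⟨C, hC0, hC⟩ := aux_bdd hq_cont hlim hx
    obtain ⟨K, hK, hKb⟩ := aux_sinpow_bound β
    apply aux_integrable hx.1 hβ (C := C*K)
    · exact hcont_h.mono (fun τ hτ => ⟨hτ.1, lt_of_le_of_lt hτ.2 hx.2⟩)
    · intro τ hτ
      have hτ' : τ ∈ Set.Ioo (0:ℝ) δ := ⟨hτ.1, lt_of_le_of_lt hτ.2 hx.2⟩
      rw [h_eq τ hτ']
      have h2 : (0:ℝ) ≤ Real.sin τ ^ (β-1) := (Real.rpow_pos_of_pos (hsin τ hτ') _).le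
      have h3 : (0:ℝ) ≤ Real.cos τ := (hcos τ hτ').le
      have h4 : Real.cos τ ≤ 1 := Real.cos_le_one τ
      have h5 : Real.sin τ ^ (β-1) ≤ K * τ ^ (β-1) :=
        hKb τ ⟨hτ.1, by linarith [hτ.2, hx.2]⟩
      have h6 : (0:ℝ) ≤ τ ^ (β-1) := Real.rpow_nonneg hτ.1.le _
      have h7 := hC τ hτ
      calc |q τ * (Real.sin τ ^ (β-1) * Real.cos τ)|
          = |q τ| * (Real.sin τ ^ (β-1) * Real.cos τ) := by
            rw [abs_mul, abs_of_nonneg (mul_nonneg h2 h3)]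
        _ ≤ C * (Real.sin τ ^ (β-1) * Real.cos τ) :=
            mul_le_mul_of_nonneg_right h7 (mul_nonneg h2 h3)
        _ ≤ C * Real.sin τ ^ (β-1) := by
            nlinarith [mul_nonneg (mul_nonneg hC0 h2) (sub_nonneg.mpr h4)]
        _ ≤ C * (K * τ ^ (β-1)) := mul_le_mul_of_nonneg_left h5 hC0
        _ = C * K * τ ^ (β-1) := by ring
  set F : ℝ → ℝ := fun x => ∫ τ in (0:ℝ)..x, f τ * Real.cot τ with hF_def
  have hFderiv : ∀ x ∈ Set.Ioo (0:ℝ) δ, HasDerivAt F (f x * Real.cot x) x := fun x hx =>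
    intervalIntegral.integral_hasDerivAt_right (hint x hx)
      (hcont_h.stronglyMeasurableAtFilter isOpen_Ioo x hx)
      (hcont_h.continuousAt (isOpen_Ioo.mem_nhds hx))
  set G : ℝ → ℝ := fun x => F x * Real.sin x ^ (-β) with hG_def
  have hGderiv : ∀ x ∈ Set.Ioo (0:ℝ) δ, HasDerivAt G
      ((f x * Real.cot x) * Real.sin x ^ (-β)
        + F x * ((-β * Real.sin x ^ (-β-1)) * Real.cos x)) x := by
    intro x hx
    have h1 : HasDerivAt (fun y => Real.sin y ^ (-β))
        ((-β * Real.sin x ^ (-β-1)) * Real.cos x) x :=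
      (Real.hasDerivAt_rpow_const (Or.inl (hsin x hx).ne')).comp x (Real.hasDerivAt_sin x)
    exact (hFderiv x hx).mul h1
  have hGnonpos : ∀ x ∈ interior (Set.Ioo (0:ℝ) δ), deriv G x ≤ 0 := by
    rw [interior_Ioo]
    intro x hx
    rw [(hGderiv x hx).deriv]
    have hs := hsin x hx
    have hid : (f x * Real.cot x) * Real.sin x ^ (-β)
        + F x * ((-β * Real.sin x ^ (-β-1)) * Real.cos x)
        = Real.cos x * Real.sin x ^ (-β-1) * (f x - β * F x) := by
      rw [Real.cot_eq_cos_div_sin]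
      have h4 : Real.sin x ^ (-β) = Real.sin x ^ (-β-1) * Real.sin x := by
        rw [← Real.rpow_add_one hs.ne' (-β-1)]; ring_nf
      rw [h4]
      field_simp
      ring
    rw [hid]
    apply mul_nonpos_of_nonneg_of_nonpos
    · exact mul_nonneg (hcos x hx).le (Real.rpow_pos_of_pos hs _).le
    · linarith [hineq x hx]
  have hGanti : AntitoneOn G (Set.Ioo 0 δ) := by
    apply antitoneOn_of_deriv_nonpos (convex_Ioo 0 δ)
    · exact fun x hx => (hGderiv x hx).continuousAt.continuousWithinAt
    · rw [interior_Ioo]; exact fun x hx => (hGderiv x hx).differentiableAt.differentiableWithinAt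
    · exact hGnonpos
  have hupper : ∀ ε > (0:ℝ), ∀ x ∈ Set.Ioo (0:ℝ) δ,
      ∃ t, t ∈ Set.Ioo (0:ℝ) δ ∧ t < x ∧ G t ≤ (γ+ε)/β := by
    intro ε hε x hx
    have h1 : ∀ᶠ τ in nhdsWithin 0 (Set.Ioi 0), q τ < γ + ε :=
      hlim.eventually_lt_const (by linarith)
    rw [Filter.eventually_iff, mem_nhdsGT_iff_exists_Ioo_subset] at h1
    obtain ⟨t₀, ht₀, hsub⟩ := h1
    have ht₀' : (0:ℝ) < t₀ := ht₀
    set t : ℝ := min (t₀/2) (x/2) with ht_def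
    have ht0 : 0 < t := lt_min (by linarith) (by linarith [hx.1])
    have htx : t < x := lt_of_le_of_lt (min_le_right _ _) (by linarith [hx.1])
    have htt₀ : t < t₀ := lt_of_le_of_lt (min_le_left _ _) (by linarith)
    have htI : t ∈ Set.Ioo (0:ℝ) δ := ⟨ht0, lt_trans htx hx.2⟩
    have htpi : t ≤ Real.pi / 2 := by linarith [htI.2]
    refine ⟨t, htI, htx, ?_⟩
    have hFt : F t ≤ (γ+ε) * (Real.sin t ^ β / β) := by
      have hint_t : MeasureTheory.IntegrableOn (fun τ => f τ * Real.cot τ)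
          (Set.Ioc 0 t) MeasureTheory.volume :=
        (intervalIntegrable_iff_integrableOn_Ioc_of_le ht0.le).mp (hint t htI)
      have hint_g : MeasureTheory.IntegrableOn
          (fun τ => (γ+ε) * (Real.sin τ ^ (β-1) * Real.cos τ))
          (Set.Ioc 0 t) MeasureTheory.volume := by
        have := (aux_sin_integrable hβ ht0 htpi).const_mul (γ+ε)
        rwa [intervalIntegrable_iff_integrableOn_Ioc_of_le ht0.le] at this
      have hle : ∀ τ ∈ Set.Ioc (0:ℝ) t,
          f τ * Real.cot τ ≤ (γ+ε) * (Real.sin τ ^ (β-1) * Real.cos τ) := by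
        intro τ hτ
        have hτ' : τ ∈ Set.Ioo (0:ℝ) δ := ⟨hτ.1, lt_of_le_of_lt hτ.2 htI.2⟩
        rw [h_eq τ hτ']
        apply mul_le_mul_of_nonneg_right
        · exact (hsub ⟨hτ.1, lt_of_le_of_lt hτ.2 htt₀⟩).le
        · exact mul_nonneg (Real.rpow_pos_of_pos (hsin τ hτ') _).le (hcos τ hτ').le
      calc F t = ∫ τ in Set.Ioc (0:ℝ) t, f τ * Real.cot τ :=
            intervalIntegral.integral_of_le ht0.le
        _ ≤ ∫ τ in Set.Ioc (0:ℝ) t, (γ+ε) * (Real.sin τ ^ (β-1) * Real.cos τ) :=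
            MeasureTheory.setIntegral_mono_on hint_t hint_g measurableSet_Ioc hle
        _ = (γ+ε) * ∫ τ in Set.Ioc (0:ℝ) t, Real.sin τ ^ (β-1) * Real.cos τ :=
            MeasureTheory.integral_const_mul _ _
        _ = (γ+ε) * ∫ τ in (0:ℝ)..t, Real.sin τ ^ (β-1) * Real.cos τ := by
            rw [intervalIntegral.integral_of_le ht0.le]
        _ = (γ+ε) * (Real.sin t ^ β / β) := by rw [aux_sin_integral hβ ht0 htpi]
    have hst := hsin t htI
    have hprod : Real.sin t ^ β * Real.sin t ^ (-β) = 1 := by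
      rw [← Real.rpow_add hst]; norm_num
    have h5 := mul_le_mul_of_nonneg_right hFt (Real.rpow_pos_of_pos hst (-β)).le
    calc G t = F t * Real.sin t ^ (-β) := rfl
      _ ≤ (γ+ε) * (Real.sin t ^ β / β) * Real.sin t ^ (-β) := h5
      _ = (γ+ε)/β * (Real.sin t ^ β * Real.sin t ^ (-β)) := by ring
      _ = (γ+ε)/β := by rw [hprod, mul_one]
  intro x hx
  have hsx := hsin x hx
  have hsxβ : 0 < Real.sin x ^ β := Real.rpow_pos_of_pos hsx β
  have key : ∀ ε > (0:ℝ), f x ≤ γ * Real.sin x ^ β + ε * Real.sin x ^ β := by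
    intro ε hε
    obtain ⟨t, htI, htx, hGt⟩ := hupper ε hε x hx
    have hGx : G x ≤ (γ+ε)/β := le_trans (hGanti htI hx htx.le) hGt
    have hprod : Real.sin x ^ (-β) * Real.sin x ^ β = 1 := by
      rw [← Real.rpow_add hsx]; norm_num
    have hFx : F x ≤ (γ+ε)/β * Real.sin x ^ β := by
      have h6 := mul_le_mul_of_nonneg_right hGx hsxβ.le
      calc F x = F x * (Real.sin x ^ (-β) * Real.sin x ^ β) := by rw [hprod, mul_one]
        _ = G x * Real.sin x ^ β := by rw [hG_def]; ring
        _ ≤ (γ+ε)/β * Real.sin x ^ β := h6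
    have h7 := hineq x hx
    have h8 : β * F x ≤ β * ((γ+ε)/β * Real.sin x ^ β) :=
      mul_le_mul_of_nonneg_left hFx hβ.le
    have h9 : β * ((γ+ε)/β * Real.sin x ^ β)
        = γ * Real.sin x ^ β + ε * Real.sin x ^ β := by
      field_simp
    rw [h9] at h8
    exact le_trans h7 h8
  by_contra hcon
  push_neg at hcon
  have h10 := key ((f x - γ * Real.sin x ^ β) / (2 * Real.sin x ^ β))
    (div_pos (by linarith) (by linarith))
  have h11 : (f x - γ * Real.sin x ^ β) / (2 * Real.sin x ^ β) * Real.sin x ^ β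
      = (f x - γ * Real.sin x ^ β) / 2 := by
    field_simp
  rw [h11] at h10
  linarith
end

section
/- Let 0 < δ < π/2 and let s : (0,δ) → ℝ be continuous and nowhere zero, with ∫₀^θ |s(τ)·cot(τ)| dτ < ∞ for all θ ∈ (0,δ). Set R(θ) = ∫₀^θ s(τ)·cot(τ) dτ and μ(θ) = 1 + s(θ)/R(θ). Then s(θ)/R(θ) > 0 for every θ ∈ (0,δ); consequently, if μ(θ) tends to a limit μ_p ∈ ℝ as θ → 0⁺, then μ_p ≥ 1. -/
/-- Umbilic slope at an isolated umbilic is at least 1: with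
`R(θ) = ∫₀^θ s(τ) cot τ dτ` and `μ(θ) = 1 + s(θ)/R(θ)`, one has `s/R > 0` on `(0,δ)`,
and if `μ(θ) → μ_p` as `θ → 0⁺` then `μ_p ≥ 1`. -/
theorem stmt_2 (δ : ℝ) (hδ0 : 0 < δ) (hδ : δ < Real.pi / 2)
    (s : ℝ → ℝ) (hs : ContinuousOn s (Set.Ioo 0 δ))
    (hsne : ∀ θ ∈ Set.Ioo 0 δ, s θ ≠ 0)
    (hint : ∀ θ ∈ Set.Ioo 0 δ,
      IntervalIntegrable (fun τ => s τ * Real.cot τ) MeasureTheory.volume 0 θ) :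
    (∀ θ ∈ Set.Ioo 0 δ, 0 < s θ / ∫ τ in (0:ℝ)..θ, s τ * Real.cot τ) ∧
    ∀ μ_p : ℝ,
      Filter.Tendsto (fun θ => 1 + s θ / ∫ τ in (0:ℝ)..θ, s τ * Real.cot τ)
        (nhdsWithin 0 (Set.Ioi 0)) (nhds μ_p) → 1 ≤ μ_p := by
  -- cot is positive on (0, δ) ⊆ (0, π/2)
  have hcot : ∀ τ ∈ Set.Ioo (0:ℝ) δ, 0 < Real.cot τ := by
    intro τ hτ
    rw [Real.cot_eq_cos_div_sin]
    apply div_pos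
    · exact Real.cos_pos_of_mem_Ioo ⟨by linarith [Real.pi_pos, hτ.1], by linarith [hτ.2]⟩
    · exact Real.sin_pos_of_pos_of_lt_pi hτ.1 (by linarith [Real.pi_pos, hτ.2])
  -- s has constant sign on Ioo 0 δ
  have hconn : IsPreconnected (Set.Ioo (0:ℝ) δ) := isPreconnected_Ioo
  have himg : IsPreconnected (s '' Set.Ioo 0 δ) := hconn.image s hs
  have hsub : s '' Set.Ioo 0 δ ⊆ Set.Ioi 0 ∪ Set.Iio 0 := by
    rintro x ⟨θ, hθ, rfl⟩
    rcases lt_or_gt_of_ne (hsne θ hθ) with h | h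
    · exact Or.inr h
    · exact Or.inl h
  have hcases := himg.subset_or_subset isOpen_Ioi isOpen_Iio
    (by simp [Set.disjoint_left]; intro x h1; linarith) hsub
  have key : ∀ θ ∈ Set.Ioo 0 δ, 0 < s θ / ∫ τ in (0:ℝ)..θ, s τ * Real.cot τ := by
    intro θ hθ
    rcases hcases with hpos | hneg
    · have hsθ : ∀ τ ∈ Set.Ioo (0:ℝ) δ, 0 < s τ := fun τ hτ =>
        hpos ⟨τ, hτ, rfl⟩
      have hR : 0 < ∫ τ in (0:ℝ)..θ, s τ * Real.cot τ := by
        apply intervalIntegral.intervalIntegral_pos_of_pos_on (hint θ hθ)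
        · intro τ hτ
          have hτδ : τ ∈ Set.Ioo (0:ℝ) δ := ⟨hτ.1, lt_trans hτ.2 hθ.2⟩
          exact mul_pos (hsθ τ hτδ) (hcot τ hτδ)
        · exact hθ.1
      exact div_pos (hsθ θ hθ) hR
    · have hsθ : ∀ τ ∈ Set.Ioo (0:ℝ) δ, s τ < 0 := fun τ hτ =>
        hneg ⟨τ, hτ, rfl⟩
      have hR : 0 < ∫ τ in (0:ℝ)..θ, -(fun τ => s τ * Real.cot τ) τ := by
        apply intervalIntegral.intervalIntegral_pos_of_pos_on ((hint θ hθ).neg)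
        · intro τ hτ
          have hτδ : τ ∈ Set.Ioo (0:ℝ) δ := ⟨hτ.1, lt_trans hτ.2 hθ.2⟩
          simp only [Pi.neg_apply]
          nlinarith [hcot τ hτδ, hsθ τ hτδ]
        · exact hθ.1
      simp only [Pi.neg_apply, intervalIntegral.integral_neg] at hR
      exact div_pos_of_neg_of_neg (hsθ θ hθ) (by linarith)
  refine ⟨key, ?_⟩
  intro μ_p hμ
  have hev : ∀ᶠ θ in nhdsWithin 0 (Set.Ioi 0),
      (1:ℝ) ≤ 1 + s θ / ∫ τ in (0:ℝ)..θ, s τ * Real.cot τ := by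
    filter_upwards [Ioo_mem_nhdsGT_of_mem (Set.mem_Ico.mpr ⟨le_refl 0, hδ0⟩)] with θ hθ
    linarith [key θ hθ]
  exact ge_of_tendsto hμ hev
end

section
/- Let 0 < δ < π/2, α > 0, and let s : (0,δ) → ℝ be continuous and nowhere zero, with ∫₀^θ |s(τ)·cot(τ)| dτ < ∞ for all θ ∈ (0,δ). Set R(θ) = ∫₀^θ s(τ)·cot(τ) dτ and μ(θ) = 1 + s(θ)/R(θ). Suppose s(θ)/sin^α(θ) tends to a limit γ ∈ ℝ as θ → 0⁺, and that μ(θ) tends to a limit μ_p ∈ ℝ as θ → 0⁺. Then μ_p ≥ α + 1. -/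
open Set Filter MeasureTheory intervalIntegral

lemma umbilic_aux (δ α γ μ_p : ℝ) (hδ0 : 0 < δ) (hδ : δ < Real.pi / 2) (hα : 0 < α)
    (s : ℝ → ℝ) (hs : ContinuousOn s (Set.Ioo 0 δ))
    (hspos : ∀ θ ∈ Set.Ioo 0 δ, 0 < s θ)
    (hint : ∀ θ ∈ Set.Ioo 0 δ,
      IntervalIntegrable (fun τ => s τ * Real.cot τ) MeasureTheory.volume 0 θ)
    (hγ : Filter.Tendsto (fun θ => s θ / Real.sin θ ^ α)
      (nhdsWithin 0 (Set.Ioi 0)) (nhds γ))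
    (hμ : Filter.Tendsto (fun θ => 1 + s θ / ∫ τ in (0:ℝ)..θ, s τ * Real.cot τ)
      (nhdsWithin 0 (Set.Ioi 0)) (nhds μ_p)) :
    α + 1 ≤ μ_p := by
  by_contra hcon
  push_neg at hcon
  set R : ℝ → ℝ := fun θ => ∫ τ in (0:ℝ)..θ, s τ * Real.cot τ with hRdef
  -- basic positivity
  have hsin : ∀ τ ∈ Ioo (0:ℝ) δ, 0 < Real.sin τ := fun τ hτ =>
    Real.sin_pos_of_pos_of_lt_pi hτ.1 (lt_trans (hτ.2.trans hδ)
      (by linarith [Real.pi_pos]))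
  have hcos : ∀ τ ∈ Ioo (0:ℝ) δ, 0 < Real.cos τ := fun τ hτ =>
    Real.cos_pos_of_mem_Ioo ⟨by linarith [Real.pi_pos, hτ.1], hτ.2.trans hδ⟩
  have hcotpos : ∀ τ ∈ Ioo (0:ℝ) δ, 0 < Real.cot τ := fun τ hτ => by
    rw [Real.cot_eq_cos_div_sin]; exact div_pos (hcos τ hτ) (hsin τ hτ)
  have hfpos : ∀ τ ∈ Ioo (0:ℝ) δ, 0 < s τ * Real.cot τ := fun τ hτ =>
    mul_pos (hspos τ hτ) (hcotpos τ hτ)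
  have hfc : ContinuousOn (fun τ => s τ * Real.cot τ) (Ioo 0 δ) := by
    apply hs.mul
    have : ContinuousOn (fun τ => Real.cos τ / Real.sin τ) (Ioo 0 δ) :=
      Real.continuous_cos.continuousOn.div Real.continuous_sin.continuousOn
        (fun τ hτ => (hsin τ hτ).ne')
    exact this.congr fun τ _ => Real.cot_eq_cos_div_sin τ
  have hRpos : ∀ θ ∈ Ioo (0:ℝ) δ, 0 < R θ := fun θ hθ =>
    intervalIntegral_pos_of_pos_on (hint θ hθ)
      (fun τ hτ => hfpos τ ⟨hτ.1, hτ.2.trans hθ.2⟩) hθ.1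
  -- R tends to 0 at 0⁺
  have hmemhalf : δ/2 ∈ Ioo (0:ℝ) δ := ⟨by linarith, by linarith⟩
  have hR0 : Tendsto R (nhdsWithin 0 (Ioi 0)) (nhds 0) := by
    have hco : ContinuousOn R (uIcc (0:ℝ) (δ/2)) :=
      continuousOn_primitive_interval' (hint _ hmemhalf) left_mem_uIcc
    have h0 : (0:ℝ) ∈ uIcc (0:ℝ) (δ/2) := left_mem_uIcc
    have := (hco 0 h0).tendsto
    rw [hRdef]
    have hR00 : R 0 = 0 := intervalIntegral.integral_same
    rw [← nhdsWithin_Ioo_eq_nhdsGT (show (0:ℝ) < δ/2 by linarith)]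
    have hsub : Ioo (0:ℝ) (δ/2) ⊆ uIcc (0:ℝ) (δ/2) := by
      rw [uIcc_of_le (by linarith : (0:ℝ) ≤ δ/2)]
      exact Ioo_subset_Icc_self
    have := (hco 0 h0).mono hsub
    simpa [hR00] using this.tendsto
  -- derivative of R
  have hderiv : ∀ τ ∈ Ioo (0:ℝ) δ, HasDerivAt R (s τ * Real.cot τ) τ := by
    intro τ hτ
    exact integral_hasDerivAt_right (hint τ hτ)
      (ContinuousOn.stronglyMeasurableAtFilter isOpen_Ioo hfc τ hτ)
      ((hfc τ hτ).continuousAt (isOpen_Ioo.mem_nhds hτ))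
  -- quotient tendsto
  have hq : Tendsto (fun θ => s θ / R θ) (nhdsWithin 0 (Ioi 0)) (nhds (μ_p - 1)) := by
    have := hμ.sub_const 1
    simpa using this
  set L := μ_p - 1 with hL
  set β := (max L 0 + α) / 2 with hβ
  have hβpos : 0 < β := by
    have : (0:ℝ) ≤ max L 0 := le_max_right _ _
    simp only [hβ]; linarith
  have hβα : β < α := by
    have h1 : L < α := by simp [hL]; linarith
    have : max L 0 < α := max_lt h1 hα
    simp only [hβ]; linarith
  have hLβ : L < β := by
    have : L ≤ max L 0 := le_max_left _ _
    simp only [hβ]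
    have h1 : L < α := by simp [hL]; linarith
    nlinarith [le_max_left L 0, le_max_right L 0]
  set C := |γ| + 1 with hC
  have hCpos : 0 < C := by positivity
  -- eventual bounds
  have hev1 : ∀ᶠ θ in nhdsWithin 0 (Ioi 0), s θ / R θ < β :=
    hq.eventually_lt_const hLβ
  have hev2 : ∀ᶠ θ in nhdsWithin 0 (Ioi 0), s θ / Real.sin θ ^ α < C :=
    hγ.eventually_lt_const (by simp [hC]; linarith [le_abs_self γ, abs_nonneg γ])
  have hev3 : ∀ᶠ θ in nhdsWithin 0 (Ioi 0), θ ∈ Ioo (0:ℝ) δ :=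
    Filter.eventually_of_mem (Ioo_mem_nhdsGT hδ0) (fun x hx => hx)
  obtain ⟨u, hu0, huP⟩ : ∃ u, 0 < u ∧ ∀ θ ∈ Ioo (0:ℝ) u,
      θ ∈ Ioo (0:ℝ) δ ∧ s θ / R θ < β ∧ s θ / Real.sin θ ^ α < C := by
    have := (hev3.and (hev1.and hev2))
    rw [eventually_iff, mem_nhdsGT_iff_exists_Ioo_subset] at this
    obtain ⟨u, hu, hsub⟩ := this
    exact ⟨u, hu, fun θ hθ => hsub hθ⟩
  set θ₀ := u/2 with hθ₀def
  have hθ₀u : θ₀ ∈ Ioo (0:ℝ) u := ⟨by positivity, by simp [hθ₀def]; linarith⟩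
  obtain ⟨hθ₀δ, hθ₀q, hθ₀C⟩ := huP θ₀ hθ₀u
  set c := R θ₀ / Real.sin θ₀ ^ β with hcdef
  have hsinθ₀ : 0 < Real.sin θ₀ := hsin θ₀ hθ₀δ
  have hcpos : 0 < c := div_pos (hRpos θ₀ hθ₀δ) (Real.rpow_pos_of_pos hsinθ₀ β)
  -- lower bound : R θ ≥ c * sin θ ^ β on Ioo 0 θ₀
  have hlow : ∀ θ ∈ Ioo (0:ℝ) θ₀, c * Real.sin θ ^ β ≤ R θ := by
    intro θ hθ
    have hIccu : Icc θ θ₀ ⊆ Ioo (0:ℝ) u := fun x hx =>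
      ⟨lt_of_lt_of_le hθ.1 hx.1, lt_of_le_of_lt hx.2 hθ₀u.2⟩
    have hIccδ : Icc θ θ₀ ⊆ Ioo (0:ℝ) δ := fun x hx => (huP x (hIccu hx)).1
    set h : ℝ → ℝ := fun x => R x / Real.sin x ^ β with hhdef
    have hanti : StrictAntiOn h (Icc θ θ₀) := by
      apply strictAntiOn_of_deriv_neg (convex_Icc θ θ₀)
      · intro x hx
        have hxδ := hIccδ hx
        exact ((hderiv x hxδ).continuousAt.continuousWithinAt).div
          (((Real.continuous_sin.continuousAt).rpow_const
            (Or.inl (hsin x hxδ).ne')).continuousWithinAt)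
          (Real.rpow_pos_of_pos (hsin x hxδ) β).ne'
      · intro x hx
        rw [interior_Icc] at hx
        have hxu : x ∈ Ioo (0:ℝ) u := hIccu (Ioo_subset_Icc_self hx)
        have hxδ : x ∈ Ioo (0:ℝ) δ := (huP x hxu).1
        have hsx : 0 < Real.sin x := hsin x hxδ
        have hcx : 0 < Real.cos x := hcos x hxδ
        have hA : 0 < Real.sin x ^ (β - 1) := Real.rpow_pos_of_pos hsx _
        have hB : 0 < Real.sin x ^ β := Real.rpow_pos_of_pos hsx β
        have hDs : HasDerivAt (fun y => Real.sin y ^ β)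
            (Real.cos x * β * Real.sin x ^ (β - 1)) x :=
          (Real.hasDerivAt_sin x).rpow_const (Or.inl hsx.ne')
        have hDh : HasDerivAt h
            ((s x * Real.cot x * Real.sin x ^ β -
              R x * (Real.cos x * β * Real.sin x ^ (β - 1))) /
              (Real.sin x ^ β) ^ 2) x :=
          (hderiv x hxδ).div hDs hB.ne'
        rw [hDh.deriv]
        apply div_neg_of_neg_of_pos _ (by positivity)
        have hkey : s x * Real.cot x * Real.sin x ^ β -
            R x * (Real.cos x * β * Real.sin x ^ (β - 1)) =
            Real.cos x * Real.sin x ^ (β - 1) * (s x - β * R x) := by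
          have h1 : Real.sin x ^ β = Real.sin x ^ (β - 1) * Real.sin x := by
            rw [← Real.rpow_add_one hsx.ne' (β - 1)]; ring_nf
          rw [h1, Real.cot_eq_cos_div_sin]
          field_simp
        rw [hkey]
        have hsβR : s x - β * R x < 0 := by
          have := (huP x hxu).2.1
          have hRx := hRpos x hxδ
          have := (div_lt_iff₀ hRx).mp this
          linarith
        exact mul_neg_of_pos_of_neg (by positivity) hsβR
    have hmem1 : θ ∈ Icc θ θ₀ := ⟨le_refl _, hθ.2.le⟩
    have hmem2 : θ₀ ∈ Icc θ θ₀ := ⟨hθ.2.le, le_refl _⟩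
    have := (hanti hmem1 hmem2 hθ.2).le
    have hsβ : 0 < Real.sin θ ^ β :=
      Real.rpow_pos_of_pos (hsin θ (hIccδ hmem1)) β
    rw [hhdef] at this
    simp only [hcdef]
    calc c * Real.sin θ ^ β ≤ (R θ / Real.sin θ ^ β) * Real.sin θ ^ β := by
          apply mul_le_mul_of_nonneg_right this hsβ.le
      _ = R θ := by field_simp
  -- upper bound : R θ ≤ C/α * sin θ ^ α on Ioo 0 θ₀
  have hupp : ∀ θ ∈ Ioo (0:ℝ) θ₀, R θ ≤ C / α * Real.sin θ ^ α := by
    intro θ hθ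
    have hθδ : θ ∈ Ioo (0:ℝ) δ := (huP θ ⟨hθ.1, hθ.2.trans hθ₀u.2⟩).1
    set F : ℝ → ℝ := fun x => C / α * Real.sin x ^ α with hFdef
    have hstep : ∀ a ∈ Ioo (0:ℝ) θ, R θ ≤ R a + F θ := by
      intro a ha
      have hIccδ : Icc a θ ⊆ Ioo (0:ℝ) δ := fun x hx =>
        ⟨lt_of_lt_of_le ha.1 hx.1, lt_of_le_of_lt hx.2 hθδ.2⟩
      have huIcc : uIcc a θ = Icc a θ := uIcc_of_le ha.2.le
      have hIa : IntervalIntegrable (fun τ => s τ * Real.cot τ) volume a θ := by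
        apply ContinuousOn.intervalIntegrable
        rw [huIcc]; exact hfc.mono hIccδ
      have haδ : a ∈ Ioo (0:ℝ) δ := hIccδ ⟨le_refl _, ha.2.le⟩
      have hadd : R a + (∫ τ in a..θ, s τ * Real.cot τ) = R θ :=
        integral_add_adjacent_intervals (hint a haδ) hIa
      -- derivative of F
      have hDF : ∀ x ∈ uIcc a θ, HasDerivAt F
          (C / α * (Real.cos x * α * Real.sin x ^ (α - 1))) x := by
        intro x hx
        rw [huIcc] at hx
        exact HasDerivAt.const_mul (C / α) ((Real.hasDerivAt_sin x).rpow_const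
          (Or.inl (hsin x (hIccδ hx)).ne'))
      have hFC : ContinuousOn (fun x => C / α * (Real.cos x * α * Real.sin x ^ (α - 1)))
          (uIcc a θ) := by
        rw [huIcc]
        have hsinpow : ContinuousOn (fun x => Real.sin x ^ (α - 1)) (Icc a θ) := by
          intro x hx
          exact ((Real.continuous_sin.continuousAt).rpow_const
            (Or.inl (hsin x (hIccδ hx)).ne')).continuousWithinAt
        exact continuousOn_const.mul
          ((Real.continuous_cos.continuousOn.mul continuousOn_const).mul hsinpow)
      have hIF : IntervalIntegrable (fun x => C / α * (Real.cos x * α * Real.sin x ^ (α - 1)))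
          volume a θ := hFC.intervalIntegrable
      have hFeq : (∫ x in a..θ, C / α * (Real.cos x * α * Real.sin x ^ (α - 1)))
          = F θ - F a := integral_eq_sub_of_hasDerivAt hDF hIF
      have hmono : (∫ τ in a..θ, s τ * Real.cot τ)
          ≤ ∫ x in a..θ, C / α * (Real.cos x * α * Real.sin x ^ (α - 1)) := by
        apply integral_mono_on ha.2.le hIa hIF
        intro x hx
        have hxδ : x ∈ Ioo (0:ℝ) δ := hIccδ hx
        have hxu : x ∈ Ioo (0:ℝ) u :=
          ⟨hxδ.1, lt_of_le_of_lt hx.2 (hθ.2.trans hθ₀u.2)⟩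
        have hsx : 0 < Real.sin x := hsin x hxδ
        have hcx : 0 < Real.cos x := hcos x hxδ
        have hsα : 0 < Real.sin x ^ α := Real.rpow_pos_of_pos hsx α
        have hsC : s x ≤ C * Real.sin x ^ α := by
          have := (huP x hxu).2.2
          have := (div_lt_iff₀ hsα).mp this
          linarith
        have h1 : Real.sin x ^ α = Real.sin x ^ (α - 1) * Real.sin x := by
          rw [← Real.rpow_add_one hsx.ne' (α - 1)]; ring_nf
        rw [Real.cot_eq_cos_div_sin]
        rw [h1] at hsC
        have hckey : C / α * (Real.cos x * α * Real.sin x ^ (α - 1))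
            = C * Real.sin x ^ (α - 1) * Real.cos x := by
          field_simp
        rw [hckey]
        have h2 : s x * (Real.cos x / Real.sin x)
            = (s x / Real.sin x) * Real.cos x := by ring
        rw [h2]
        apply mul_le_mul_of_nonneg_right _ hcx.le
        rw [div_le_iff₀ hsx]
        calc s x ≤ C * (Real.sin x ^ (α - 1) * Real.sin x) := hsC
          _ = C * Real.sin x ^ (α - 1) * Real.sin x := by ring
      have hFa : 0 ≤ F a := by
        apply mul_nonneg (by positivity)
        exact (Real.rpow_pos_of_pos (hsin a haδ) α).le
      linarith [hFeq ▸ hmono]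
    -- let a → 0⁺
    have hevt : ∀ᶠ a in nhdsWithin 0 (Ioi 0), R θ ≤ R a + F θ := by
      filter_upwards [Filter.eventually_of_mem (Ioo_mem_nhdsGT hθ.1)
        (fun x hx => hx)] with a ha
      exact hstep a ha
    have htnd : Tendsto (fun a => R a + F θ) (nhdsWithin 0 (Ioi 0)) (nhds (F θ)) := by
      simpa using hR0.add_const (F θ)
    exact ge_of_tendsto htnd hevt
  -- contradiction
  have htnd2 : Tendsto (fun θ => C / α * Real.sin θ ^ (α - β))
      (nhdsWithin 0 (Ioi 0)) (nhds 0) := by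
    have h1 : Tendsto Real.sin (nhdsWithin 0 (Ioi 0)) (nhds 0) := by
      simpa using (Real.continuous_sin.tendsto 0).mono_left nhdsWithin_le_nhds
    have h2 : ContinuousAt (fun x : ℝ => x ^ (α - β)) 0 :=
      Real.continuousAt_rpow_const 0 (α - β) (Or.inr (by linarith))
    have h3 : Tendsto (fun θ => Real.sin θ ^ (α - β)) (nhdsWithin 0 (Ioi 0)) (nhds 0) := by
      have := (h2.tendsto.comp h1)
      simpa [Function.comp_def, Real.zero_rpow (by linarith : α - β ≠ 0)] using this
    simpa using h3.const_mul (C / α)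
  have hevlt : ∀ᶠ θ in nhdsWithin 0 (Ioi 0), C / α * Real.sin θ ^ (α - β) < c :=
    htnd2.eventually_lt_const hcpos
  have hevmem : ∀ᶠ θ in nhdsWithin 0 (Ioi 0), θ ∈ Ioo (0:ℝ) θ₀ :=
    Filter.eventually_of_mem (Ioo_mem_nhdsGT hθ₀u.1) (fun x hx => hx)
  obtain ⟨θ, hθlt, hθmem⟩ := (hevlt.and hevmem).exists
  have hsθ : 0 < Real.sin θ := hsin θ (huP θ ⟨hθmem.1, hθmem.2.trans hθ₀u.2⟩).1
  have hsβθ : 0 < Real.sin θ ^ β := Real.rpow_pos_of_pos hsθ β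
  have h1 := hlow θ hθmem
  have h2 := hupp θ hθmem
  have h3 : Real.sin θ ^ α = Real.sin θ ^ (α - β) * Real.sin θ ^ β := by
    rw [← Real.rpow_add hsθ]; ring_nf
  rw [h3] at h2
  have h4 : c * Real.sin θ ^ β ≤ C / α * Real.sin θ ^ (α - β) * Real.sin θ ^ β := by
    calc c * Real.sin θ ^ β ≤ R θ := h1
      _ ≤ C / α * (Real.sin θ ^ (α - β) * Real.sin θ ^ β) := h2
      _ = C / α * Real.sin θ ^ (α - β) * Real.sin θ ^ β := by ring
  have h5 : c ≤ C / α * Real.sin θ ^ (α - β) :=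
    le_of_mul_le_mul_right (by linarith) hsβθ
  linarith



/-- Main umbilic-slope theorem (lower bound): if `s(θ)/sin^α θ → γ` and
`μ(θ) = 1 + s(θ)/∫₀^θ s cot → μ_p` as `θ → 0⁺`, then `μ_p ≥ α + 1`. -/
theorem stmt_3 (δ α γ μ_p : ℝ) (hδ0 : 0 < δ) (hδ : δ < Real.pi / 2) (hα : 0 < α)
    (s : ℝ → ℝ) (hs : ContinuousOn s (Set.Ioo 0 δ))
    (hsne : ∀ θ ∈ Set.Ioo 0 δ, s θ ≠ 0)
    (hint : ∀ θ ∈ Set.Ioo 0 δ,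
      IntervalIntegrable (fun τ => s τ * Real.cot τ) MeasureTheory.volume 0 θ)
    (hγ : Filter.Tendsto (fun θ => s θ / Real.sin θ ^ α)
      (nhdsWithin 0 (Set.Ioi 0)) (nhds γ))
    (hμ : Filter.Tendsto (fun θ => 1 + s θ / ∫ τ in (0:ℝ)..θ, s τ * Real.cot τ)
      (nhdsWithin 0 (Set.Ioi 0)) (nhds μ_p)) :
    α + 1 ≤ μ_p := by
  have hhalf : δ/2 ∈ Ioo (0:ℝ) δ := ⟨by linarith, by linarith⟩
  -- no sign change by IVT
  have hivt : ∀ a b, a ∈ Ioo (0:ℝ) δ → b ∈ Ioo (0:ℝ) δ → s a < 0 → 0 < s b → False := by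
    intro a b ha hb hsa hsb
    rcases le_total a b with hab | hab
    · have hsub : Icc a b ⊆ Ioo (0:ℝ) δ := fun x hx =>
        ⟨lt_of_lt_of_le ha.1 hx.1, lt_of_le_of_lt hx.2 hb.2⟩
      have := intermediate_value_Icc hab (hs.mono hsub)
      obtain ⟨c, hc, hsc⟩ := this ⟨hsa.le, hsb.le⟩
      exact hsne c (hsub hc) hsc
    · have hsub : Icc b a ⊆ Ioo (0:ℝ) δ := fun x hx =>
        ⟨lt_of_lt_of_le hb.1 hx.1, lt_of_le_of_lt hx.2 ha.2⟩
      have := intermediate_value_Icc' hab (hs.mono hsub)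
      obtain ⟨c, hc, hsc⟩ := this ⟨hsa.le, hsb.le⟩
      exact hsne c (hsub hc) hsc
  by_cases hpos : 0 < s (δ/2)
  · have hall : ∀ θ ∈ Ioo (0:ℝ) δ, 0 < s θ := by
      intro θ hθ
      rcases lt_or_gt_of_ne (hsne θ hθ) with hneg | h
      · exact absurd (hivt θ (δ/2) hθ hhalf hneg hpos) not_false
      · exact h
    exact umbilic_aux δ α γ μ_p hδ0 hδ hα s hs hall hint hγ hμ
  · have hneg : s (δ/2) < 0 := lt_of_le_of_ne (not_lt.mp hpos) (hsne _ hhalf)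
    have hall : ∀ θ ∈ Ioo (0:ℝ) δ, s θ < 0 := by
      intro θ hθ
      rcases lt_or_gt_of_ne (hsne θ hθ) with h | hgt
      · exact h
      · exact absurd (hivt (δ/2) θ hhalf hθ hneg hgt) not_false
    have hfun : ∀ θ : ℝ, (fun τ => -s τ * Real.cot τ) = fun τ => -(s τ * Real.cot τ) :=
      fun _ => funext fun τ => by ring
    apply umbilic_aux δ α (-γ) μ_p hδ0 hδ hα (fun θ => -s θ) hs.neg
      (fun θ hθ => neg_pos.mpr (hall θ hθ))
    · intro θ hθ
      rw [hfun θ]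
      exact (hint θ hθ).neg
    · have := hγ.neg
      simpa [neg_div] using this
    · have heq : (fun θ => 1 + (-s θ) / ∫ τ in (0:ℝ)..θ, -s τ * Real.cot τ)
          = fun θ => 1 + s θ / ∫ τ in (0:ℝ)..θ, s τ * Real.cot τ := by
        funext θ
        rw [hfun θ, intervalIntegral.integral_neg, neg_div_neg_eq]
      rw [heq]
      exact hμ
end

section
/- Let 0 < δ < π/2, α > 0, and let s : (0,δ) → ℝ be continuous and nowhere zero, with ∫₀^θ |s(τ)·cot(τ)| dτ < ∞ for all θ ∈ (0,δ). Set R(θ) = ∫₀^θ s(τ)·cot(τ) dτ and μ(θ) = 1 + s(θ)/R(θ). Suppose s(θ)/sin^α(θ) tends to a limit γ ∈ ℝ with γ ≠ 0 as θ → 0⁺, and that μ(θ) tends to a limit μ_p ∈ ℝ as θ → 0⁺. Then μ_p = α + 1. -/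
/-!
Since `R' = s cot` and `(sin^α)' = α sin^(α-1) cos`, the quotient of derivatives is
`s / (α sin^α) → γ / α`, so L'Hôpital's rule gives `R / sin^α → γ / α`. Dividing
`s / sin^α → γ` by this nonzero limit yields `s / R → α`, i.e. `μ → 1 + α`.
-/

open Set Filter MeasureTheory intervalIntegral Real Topology

theorem tendsto_integral_nhdsGT {f : ℝ → ℝ} {a b : ℝ} (hab : a < b)
    (hf : IntervalIntegrable f volume a b) :
    Tendsto (fun x => ∫ t in a..x, f t) (𝓝[>] a) (𝓝 0) := by
  have hcont := continuousOn_primitive_interval' hf left_mem_uIcc a left_mem_uIcc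
  rw [uIcc_of_le hab.le] at hcont
  rw [← nhdsWithin_Ioo_eq_nhdsGT hab]
  simpa using hcont.tendsto.mono_left (nhdsWithin_mono _ Ioo_subset_Icc_self)

theorem tendsto_integral_div_of_tendsto_div_deriv {f G G' : ℝ → ℝ} {a b : ℝ} {l : Filter ℝ}
    (hab : a < b) (hf : ContinuousOn f (Ioo a b)) (hfi : IntervalIntegrable f volume a b)
    (hG : ∀ x ∈ Ioo a b, HasDerivAt G (G' x) x) (hG' : ∀ x ∈ Ioo a b, G' x ≠ 0)
    (hGa : Tendsto G (𝓝[>] a) (𝓝 0)) (hlim : Tendsto (fun x => f x / G' x) (𝓝[>] a) l) :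
    Tendsto (fun x => (∫ t in a..x, f t) / G x) (𝓝[>] a) l := by
  refine HasDerivAt.lhopital_zero_right_on_Ioo hab (fun x hx => ?_) hG hG'
    (tendsto_integral_nhdsGT hab hfi) hGa hlim
  exact integral_hasDerivAt_right
    (hfi.mono_set (uIcc_subset_uIcc left_mem_uIcc (mem_uIcc_of_le hx.1.le hx.2.le)))
    (hf.stronglyMeasurableAtFilter isOpen_Ioo x hx) (hf.continuousAt (isOpen_Ioo.mem_nhds hx))

theorem tendsto_sin_rpow_nhdsGT_zero {α : ℝ} (hα : 0 < α) :
    Tendsto (fun θ => sin θ ^ α) (𝓝[>] 0) (𝓝 0) := by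
  have hcont : ContinuousAt (fun θ => sin θ ^ α) 0 :=
    continuous_sin.continuousAt.rpow_const (Or.inr hα.le)
  simpa [zero_rpow hα.ne'] using hcont.tendsto.mono_left nhdsWithin_le_nhds

theorem sin_pos_of_mem_Ioo_of_le_pi_div_two {b x : ℝ} (hb : b ≤ π / 2) (hx : x ∈ Ioo 0 b) :
    0 < sin x :=
  sin_pos_of_pos_of_lt_pi hx.1 (by linarith [pi_pos, hx.2])

theorem cos_pos_of_mem_Ioo_of_le_pi_div_two {b x : ℝ} (hb : b ≤ π / 2) (hx : x ∈ Ioo 0 b) :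
    0 < cos x :=
  cos_pos_of_mem_Ioo ⟨by linarith [pi_pos, hx.1], by linarith [hx.2]⟩

section

variable {s : ℝ → ℝ} {α b γ : ℝ}

theorem tendsto_integral_mul_cot_div_sin_rpow (hα : 0 < α) (hb : 0 < b) (hbπ : b ≤ π / 2)
    (hs : ContinuousOn s (Ioo 0 b))
    (hint : IntervalIntegrable (fun τ => s τ * cot τ) volume 0 b)
    (hγ : Tendsto (fun θ => s θ / sin θ ^ α) (𝓝[>] 0) (𝓝 γ)) :
    Tendsto (fun θ => (∫ τ in 0..θ, s τ * cot τ) / sin θ ^ α) (𝓝[>] 0) (𝓝 (γ / α)) := by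
  have hsin := fun x (hx : x ∈ Ioo 0 b) => sin_pos_of_mem_Ioo_of_le_pi_div_two hbπ hx
  have hcos := fun x (hx : x ∈ Ioo 0 b) => cos_pos_of_mem_Ioo_of_le_pi_div_two hbπ hx
  have hcot : ContinuousOn cot (Ioo 0 b) :=
    (continuous_cos.continuousOn.div continuous_sin.continuousOn fun x hx =>
      (hsin x hx).ne').congr fun x _ => cot_eq_cos_div_sin x
  refine tendsto_integral_div_of_tendsto_div_deriv hb (hs.mul hcot) hint
    (G' := fun x => cos x * α * sin x ^ (α - 1))
    (fun x hx => (hasDerivAt_sin x).rpow_const (Or.inl (hsin x hx).ne'))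
    (fun x hx => by have := rpow_pos_of_pos (hsin x hx) (α - 1); have := hcos x hx; positivity)
    (tendsto_sin_rpow_nhdsGT_zero hα) ((hγ.div_const α).congr' ?_)
  filter_upwards [Ioo_mem_nhdsGT hb] with x hx
  have hsinx := (hsin x hx).ne'
  have := (rpow_pos_of_pos (hsin x hx) α).ne'
  have := (hcos x hx).ne'
  rw [cot_eq_cos_div_sin, rpow_sub_one hsinx]
  field_simp

theorem tendsto_div_integral_mul_cot (hα : 0 < α) (hb : 0 < b) (hbπ : b ≤ π / 2)
    (hs : ContinuousOn s (Ioo 0 b))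
    (hint : IntervalIntegrable (fun τ => s τ * cot τ) volume 0 b)
    (hγ : Tendsto (fun θ => s θ / sin θ ^ α) (𝓝[>] 0) (𝓝 γ)) (hγ0 : γ ≠ 0) :
    Tendsto (fun θ => s θ / ∫ τ in 0..θ, s τ * cot τ) (𝓝[>] 0) (𝓝 α) := by
  have hquot := hγ.div (tendsto_integral_mul_cot_div_sin_rpow hα hb hbπ hs hint hγ)
    (div_ne_zero hγ0 hα.ne')
  rw [div_div_cancel₀ hγ0] at hquot
  refine hquot.congr' ?_
  filter_upwards [Ioo_mem_nhdsGT hb] with x hx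
  have hsinx := sin_pos_of_mem_Ioo_of_le_pi_div_two hbπ hx
  exact div_div_div_cancel_right₀ (rpow_pos_of_pos hsinx α).ne' _ _

end

theorem stmt_4_general (δ α γ μ_p : ℝ) (hδ0 : 0 < δ) (hδ : δ < Real.pi / 2) (hα : 0 < α)
    (s : ℝ → ℝ) (hs : ContinuousOn s (Set.Ioo 0 δ))
    (hint : ∀ θ ∈ Set.Ioo 0 δ,
      IntervalIntegrable (fun τ => s τ * Real.cot τ) MeasureTheory.volume 0 θ)
    (hγ : Filter.Tendsto (fun θ => s θ / Real.sin θ ^ α)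
      (nhdsWithin 0 (Set.Ioi 0)) (nhds γ))
    (hγ0 : γ ≠ 0)
    (hμ : Filter.Tendsto (fun θ => 1 + s θ / ∫ τ in (0:ℝ)..θ, s τ * Real.cot τ)
      (nhdsWithin 0 (Set.Ioi 0)) (nhds μ_p)) :
    μ_p = α + 1 := by
  have hb : δ / 2 ∈ Ioo 0 δ := ⟨half_pos hδ0, half_lt_self hδ0⟩
  have hsR := tendsto_div_integral_mul_cot hα hb.1 (by linarith [hb.2])
    (hs.mono (Ioo_subset_Ioo_right hb.2.le)) (hint _ hb) hγ hγ0
  linarith [tendsto_nhds_unique hμ (tendsto_const_nhds.add hsR)]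

/-- Main umbilic-slope theorem (equality case): if `s(θ)/sin^α θ → γ ≠ 0` and
`μ(θ) = 1 + s(θ)/∫₀^θ s cot → μ_p` as `θ → 0⁺`, then `μ_p = α + 1`. -/
theorem stmt_4 (δ α γ μ_p : ℝ) (hδ0 : 0 < δ) (hδ : δ < Real.pi / 2) (hα : 0 < α)
    (s : ℝ → ℝ) (hs : ContinuousOn s (Set.Ioo 0 δ))
    (hsne : ∀ θ ∈ Set.Ioo 0 δ, s θ ≠ 0)
    (hint : ∀ θ ∈ Set.Ioo 0 δ,
      IntervalIntegrable (fun τ => s τ * Real.cot τ) MeasureTheory.volume 0 θ)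
    (hγ : Filter.Tendsto (fun θ => s θ / Real.sin θ ^ α)
      (nhdsWithin 0 (Set.Ioi 0)) (nhds γ))
    (hγ0 : γ ≠ 0)
    (hμ : Filter.Tendsto (fun θ => 1 + s θ / ∫ τ in (0:ℝ)..θ, s τ * Real.cot τ)
      (nhdsWithin 0 (Set.Ioi 0)) (nhds μ_p)) :
    μ_p = α + 1 :=
  stmt_4_general δ α γ μ_p hδ0 hδ hα s hs hint hγ hγ0 hμ
end

section
/- Let 0 < δ < π/2, α > 0, and let s : (0,δ) → ℝ be continuous and nowhere zero, with ∫₀^θ |s(τ)·cot(τ)| dτ < ∞ for all θ ∈ (0,δ). Set R(θ) = ∫₀^θ s(τ)·cot(τ) dτ and μ(θ) = 1 + s(θ)/R(θ). Suppose μ(θ) tends to a limit μ_p ∈ ℝ as θ → 0⁺ with μ_p > α + 1. Then s(θ)/sin^α(θ) → 0 as θ → 0⁺. -/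
/-!
Pick `α < β < μ_p - 1`. Since `R' = s cot` and `s / R → μ_p - 1`, near `0` we have
`(log |R|)' = (s / R) cot ≥ β cot = (β log sin)'`, so `|R| / sin^β` is monotone and hence
`R = O(sin^β)`. Then `s = (s / R) R = O(sin^β)` as well, and `s / sin^α = O(sin^(β - α)) → 0`.
-/

open Set Filter Topology Asymptotics Real

theorem monotoneOn_abs_div_rpow_of_mul_logDeriv_le {R R' φ φ' : ℝ → ℝ} {a b β : ℝ}
    (hR : ∀ x ∈ Ioo a b, HasDerivAt R (R' x) x) (hR0 : ∀ x ∈ Ioo a b, R x ≠ 0)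
    (hφ : ∀ x ∈ Ioo a b, HasDerivAt φ (φ' x) x) (hφ0 : ∀ x ∈ Ioo a b, 0 < φ x)
    (hle : ∀ x ∈ Ioo a b, β * (φ' x / φ x) ≤ R' x / R x) :
    MonotoneOn (fun x => |R x| / φ x ^ β) (Ioo a b) := by
  set g : ℝ → ℝ := fun x => log (R x) - β * log (φ x)
  have hg : ∀ x ∈ Ioo a b, HasDerivAt g (R' x / R x - β * (φ' x / φ x)) x := fun x hx =>
    ((hR x hx).log (hR0 x hx)).sub (((hφ x hx).log (hφ0 x hx).ne').const_mul β)
  have hmono : MonotoneOn g (Ioo a b) := by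
    refine monotoneOn_of_deriv_nonneg (convex_Ioo a b)
      (fun x hx => (hg x hx).continuousAt.continuousWithinAt) ?_ ?_ <;> rw [interior_Ioo]
    · exact fun x hx => (hg x hx).differentiableAt.differentiableWithinAt
    · intro x hx
      rw [(hg x hx).deriv]
      linarith [hle x hx]
  have hexp : ∀ x ∈ Ioo a b, |R x| / φ x ^ β = exp (g x) := fun x hx => by
    rw [exp_sub, exp_log_eq_abs (hR0 x hx), rpow_def_of_pos (hφ0 x hx), mul_comm]
  intro x hx y hy hxy
  simp only [hexp x hx, hexp y hy]
  exact exp_le_exp.mpr (hmono hx hy hxy)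

theorem isBigO_rpow_of_mul_logDeriv_le {R R' φ φ' : ℝ → ℝ} {a b β : ℝ} (hab : a < b)
    (hR : ∀ x ∈ Ioo a b, HasDerivAt R (R' x) x) (hR0 : ∀ x ∈ Ioo a b, R x ≠ 0)
    (hφ : ∀ x ∈ Ioo a b, HasDerivAt φ (φ' x) x) (hφ0 : ∀ x ∈ Ioo a b, 0 < φ x)
    (hle : ∀ x ∈ Ioo a b, β * (φ' x / φ x) ≤ R' x / R x) :
    R =O[𝓝[>] a] fun x => φ x ^ β := by
  obtain ⟨y, hy⟩ := exists_between hab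
  have hmono := monotoneOn_abs_div_rpow_of_mul_logDeriv_le hR hR0 hφ hφ0 hle
  refine IsBigO.of_bound (|R y| / φ y ^ β) ?_
  filter_upwards [Ioo_mem_nhdsGT hy.1] with x hx
  have hxab : x ∈ Ioo a b := ⟨hx.1, hx.2.trans hy.2⟩
  have hpos : 0 < φ x ^ β := rpow_pos_of_pos (hφ0 x hxab) β
  rw [norm_eq_abs, norm_eq_abs, abs_of_pos hpos, ← div_le_iff₀ hpos]
  exact hmono hxab (show y ∈ Ioo a b from hy) hx.2.le

theorem tendsto_div_rpow_zero_of_isBigO_rpow {ι : Type*} {l : Filter ι} {f φ : ι → ℝ}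
    {α β : ℝ} (hαβ : α < β) (hφ : Tendsto φ l (𝓝[>] 0))
    (hf : f =O[l] fun x => φ x ^ β) :
    Tendsto (fun x => f x / φ x ^ α) l (𝓝 0) := by
  obtain ⟨hφ, hφ0⟩ := tendsto_nhdsWithin_iff.mp hφ
  have hquot : (fun x => f x / φ x ^ α) =O[l] fun x => φ x ^ (β - α) := by
    refine (hf.mul (isBigO_refl (fun x => (φ x ^ α)⁻¹) l)).congr' ?_ ?_
    · exact .of_forall fun x => (div_eq_mul_inv _ _).symm
    · filter_upwards [hφ0] with x hx
      rw [rpow_sub hx, div_eq_mul_inv]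
  exact hquot.trans_tendsto (hφ.rpow_const_nhds_zero (sub_pos.mpr hαβ))

theorem tendsto_sin_nhdsGT_zero : Tendsto sin (𝓝[>] 0) (𝓝[>] 0) := by
  refine tendsto_nhdsWithin_iff.mpr ⟨?_, ?_⟩
  · simpa using continuous_sin.continuousWithinAt.tendsto (s := Ioi 0) (x := 0)
  · filter_upwards [Ioo_mem_nhdsGT pi_pos] with θ hθ using sin_pos_of_mem_Ioo hθ

theorem hasDerivAt_integral_of_continuousOn {f : ℝ → ℝ} {U : Set ℝ} {a x : ℝ} (hU : IsOpen U)
    (hf : ContinuousOn f U) (hx : x ∈ U) (hi : IntervalIntegrable f MeasureTheory.volume a x) :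
    HasDerivAt (fun u => ∫ t in a..u, f t) (f x) x :=
  intervalIntegral.integral_hasDerivAt_right hi (hf.stronglyMeasurableAtFilter hU x hx)
    (hf.continuousAt (hU.mem_nhds hx))

theorem continuousOn_mul_cot {s : ℝ → ℝ} {δ : ℝ} (hδ : δ ≤ π) (hs : ContinuousOn s (Ioo 0 δ)) :
    ContinuousOn (fun τ => s τ * cot τ) (Ioo 0 δ) := by
  refine (hs.mul (continuous_cos.continuousOn.div continuous_sin.continuousOn ?_)).congr
    fun τ _ => by rw [cot_eq_cos_div_sin]; rfl
  exact fun τ hτ => (sin_pos_of_pos_of_lt_pi hτ.1 (hτ.2.trans_le hδ)).ne'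

theorem stmt_5_general (δ α μ_p : ℝ) (hδ0 : 0 < δ) (hδ : δ < Real.pi / 2) (hα : 0 < α)
    (s : ℝ → ℝ) (hs : ContinuousOn s (Set.Ioo 0 δ))
    (hint : ∀ θ ∈ Set.Ioo 0 δ,
      IntervalIntegrable (fun τ => s τ * Real.cot τ) MeasureTheory.volume 0 θ)
    (hμ : Filter.Tendsto (fun θ => 1 + s θ / ∫ τ in (0:ℝ)..θ, s τ * Real.cot τ)
      (nhdsWithin 0 (Set.Ioi 0)) (nhds μ_p))
    (hμp : α + 1 < μ_p) :
    Filter.Tendsto (fun θ => s θ / Real.sin θ ^ α)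
      (nhdsWithin 0 (Set.Ioi 0)) (nhds 0) := by
  set R : ℝ → ℝ := fun θ => ∫ τ in (0:ℝ)..θ, s τ * cot τ
  obtain ⟨β, hαβ, hβμ⟩ := exists_between (show α < μ_p - 1 by linarith)
  have hq : Tendsto (fun θ => s θ / R θ) (𝓝[>] 0) (𝓝 (μ_p - 1)) := by
    simpa using hμ.sub_const 1
  obtain ⟨η, hη0, hη⟩ := mem_nhdsGT_iff_exists_Ioo_subset.mp
    (inter_mem (Ioo_mem_nhdsGT hδ0) (hq.eventually (lt_mem_nhds hβμ)))
  have hsub : Ioo 0 η ⊆ Ioo 0 δ := fun θ hθ => (hη hθ).1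
  have hacute : Ioo 0 η ⊆ Ioo 0 (π / 2) := fun θ hθ => ⟨hθ.1, (hsub hθ).2.trans hδ⟩
  have hsR : ∀ θ ∈ Ioo 0 η, β < s θ / R θ := fun θ hθ => (hη hθ).2
  have hR0 : ∀ θ ∈ Ioo 0 η, R θ ≠ 0 := fun θ hθ hR => by
    linarith [hsR θ hθ, hα.trans hαβ, show s θ / R θ = 0 by rw [hR, div_zero]]
  have hsin : ∀ θ ∈ Ioo 0 η, 0 < sin θ := fun θ hθ =>
    sin_pos_of_pos_of_lt_pi (hacute hθ).1 ((hacute hθ).2.trans (half_lt_self pi_pos))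
  have hcos : ∀ θ ∈ Ioo 0 η, 0 < cos θ := fun θ hθ =>
    cos_pos_of_mem_Ioo ⟨by linarith [(hacute hθ).1, pi_pos], (hacute hθ).2⟩
  have hRO : R =O[𝓝[>] 0] fun θ => sin θ ^ β := by
    refine isBigO_rpow_of_mul_logDeriv_le hη0
      (fun θ hθ => hasDerivAt_integral_of_continuousOn isOpen_Ioo
        (continuousOn_mul_cot (by linarith [pi_pos]) hs) (hsub hθ) (hint θ (hsub hθ)))
      hR0 (fun θ _ => hasDerivAt_sin θ) hsin fun θ hθ => ?_
    rw [cot_eq_cos_div_sin, mul_div_right_comm]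
    exact mul_le_mul_of_nonneg_right (hsR θ hθ).le ((div_pos (hcos θ hθ) (hsin θ hθ)).le)
  have hsO : s =O[𝓝[>] 0] fun θ => sin θ ^ β := by
    refine (hq.isBigO_one ℝ |>.mul hRO).congr' ?_ (.of_forall fun θ => one_mul _)
    filter_upwards [Ioo_mem_nhdsGT hη0] with θ hθ
    exact div_mul_cancel₀ _ (hR0 θ hθ)
  exact tendsto_div_rpow_zero_of_isBigO_rpow hαβ tendsto_sin_nhdsGT_zero hsO

/-- Main umbilic-slope theorem (converse part): if
`μ(θ) = 1 + s(θ)/∫₀^θ s cot → μ_p` as `θ → 0⁺` with `μ_p > α + 1`,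
then `s(θ)/sin^α θ → 0`. -/
theorem stmt_5 (δ α μ_p : ℝ) (hδ0 : 0 < δ) (hδ : δ < Real.pi / 2) (hα : 0 < α)
    (s : ℝ → ℝ) (hs : ContinuousOn s (Set.Ioo 0 δ))
    (hsne : ∀ θ ∈ Set.Ioo 0 δ, s θ ≠ 0)
    (hint : ∀ θ ∈ Set.Ioo 0 δ,
      IntervalIntegrable (fun τ => s τ * Real.cot τ) MeasureTheory.volume 0 θ)
    (hμ : Filter.Tendsto (fun θ => 1 + s θ / ∫ τ in (0:ℝ)..θ, s τ * Real.cot τ)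
      (nhdsWithin 0 (Set.Ioi 0)) (nhds μ_p))
    (hμp : α + 1 < μ_p) :
    Filter.Tendsto (fun θ => s θ / Real.sin θ ^ α)
      (nhdsWithin 0 (Set.Ioi 0)) (nhds 0) :=
  stmt_5_general δ α μ_p hδ0 hδ hα s hs hint hμ hμp
end

section
/- Let 0 < δ < π/2 and let s : [0,δ) → ℝ be continuous, nowhere zero on (0,δ), with s(0) = 0, differentiable at 0 with s'(0) = 0, and with ∫₀^θ |s(τ)·cot(τ)| dτ < ∞ for all θ ∈ (0,δ). Set R(θ) = ∫₀^θ s(τ)·cot(τ) dτ and μ(θ) = 1 + s(θ)/R(θ). If μ(θ) tends to a limit μ_p ∈ ℝ as θ → 0⁺, then μ_p ≥ 2. -/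
/-!
Write `R = cotIntegral s`. Since `s` does not vanish on the connected set `(0, δ)`, it has a
constant sign, and replacing `s` by `-s` changes neither `s / R` nor the hypotheses, so we may
assume `s > 0`; then `R > 0` on `(0, δ)`. If `μ_p < 2`, pick `ε < 1` with `s < ε R` near `0`.
Since `τ cot τ ≤ 1` on `(0, π/2)`, a bound `R(τ) ≤ C τ` gives
`R(θ) = ∫₀^θ s cot ≤ ∫₀^θ ε C τ cot τ dτ ≤ ε C θ`. Starting from `R(θ) ≤ θ`, which holds because
`s(τ) = o(τ)`, iteration yields `R(θ) ≤ εⁿ θ` for all `n`, so `R(θ) ≤ 0`, a contradiction.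
-/

open Filter Set Real Topology MeasureTheory intervalIntegral

noncomputable def cotIntegral (s : ℝ → ℝ) (θ : ℝ) : ℝ :=
  ∫ τ in (0 : ℝ)..θ, s τ * cot τ

lemma cotIntegral_neg (s : ℝ → ℝ) (θ : ℝ) : cotIntegral (-s) θ = -cotIntegral s θ := by
  simp only [cotIntegral, Pi.neg_apply, neg_mul, intervalIntegral.integral_neg]

lemma cot_pos_of_mem_Ioo {τ : ℝ} (hτ : τ ∈ Ioo 0 (π / 2)) : 0 < cot τ := by
  rw [cot_eq_cos_div_sin]
  exact div_pos (cos_pos_of_mem_Ioo ⟨by linarith [pi_pos, hτ.1], hτ.2⟩)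
    (sin_pos_of_pos_of_lt_pi hτ.1 (by linarith [pi_pos, hτ.2]))

lemma mul_cot_le_one {τ : ℝ} (hτ : τ ∈ Ioo 0 (π / 2)) : τ * cot τ ≤ 1 := by
  have hcos : 0 < cos τ := cos_pos_of_mem_Ioo ⟨by linarith [pi_pos, hτ.1], hτ.2⟩
  have hsin : 0 < sin τ := sin_pos_of_pos_of_lt_pi hτ.1 (by linarith [pi_pos, hτ.2])
  have htan : τ * cos τ < sin τ := by
    simpa only [tan_eq_sin_div_cos, lt_div_iff₀ hcos] using lt_tan hτ.1 hτ.2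
  rw [cot_eq_cos_div_sin, ← mul_div_assoc, div_le_one hsin]
  exact htan.le

lemma IsPreconnected.forall_pos_or_forall_neg {X : Type*} [TopologicalSpace X] {S : Set X}
    (hS : IsPreconnected S) {f : X → ℝ} (hf : ContinuousOn f S) (hne : ∀ x ∈ S, f x ≠ 0) :
    (∀ x ∈ S, 0 < f x) ∨ (∀ x ∈ S, f x < 0) := by
  by_contra! h
  obtain ⟨⟨a, ha, hfa⟩, ⟨b, hb, hfb⟩⟩ := h
  obtain ⟨x, hx, hfx⟩ := hS.intermediate_value ha hb hf ⟨hfa, hfb⟩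
  exact hne x hx hfx

lemma tendsto_div_nhdsGT_of_hasDerivWithinAt {f : ℝ → ℝ} {f' : ℝ} (hf0 : f 0 = 0)
    (hf : HasDerivWithinAt f f' (Ici 0) 0) : Tendsto (fun x => f x / x) (𝓝[>] 0) (𝓝 f') := by
  have h := hasDerivWithinAt_iff_tendsto_slope.mp hf
  rw [Ici_sdiff_left] at h
  refine h.congr fun x => ?_
  rw [slope_def_field, hf0, sub_zero, sub_zero]

lemma nonpos_of_le_mul_of_forall_le_mul_imp {S : Set ℝ} {g : ℝ → ℝ} {ε C₀ : ℝ} (hε0 : 0 ≤ ε)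
    (hε1 : ε < 1) (hC₀ : 0 ≤ C₀) (h₀ : ∀ x ∈ S, g x ≤ C₀ * x)
    (hstep : ∀ C, 0 ≤ C → (∀ x ∈ S, g x ≤ C * x) → ∀ x ∈ S, g x ≤ ε * C * x)
    {x : ℝ} (hx : x ∈ S) : g x ≤ 0 := by
  have hpow : ∀ n : ℕ, ∀ y ∈ S, g y ≤ ε ^ n * C₀ * y := by
    intro n
    induction n with
    | zero => simpa only [pow_zero, one_mul] using h₀
    | succ n ih => exact fun y hy => (hstep _ (by positivity) ih y hy).trans_eq (by ring)
  have hlim : Tendsto (fun n : ℕ => ε ^ n * C₀ * x) atTop (𝓝 0) := by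
    simpa using ((tendsto_pow_atTop_nhds_zero_of_lt_one hε0 hε1).mul_const C₀).mul_const x
  exact ge_of_tendsto' hlim fun n => hpow n x hx

section cotIntegral

variable {s : ℝ → ℝ} {x : ℝ}

lemma cotIntegral_pos (hx : x ∈ Ioo 0 (π / 2))
    (hint : IntervalIntegrable (fun τ => s τ * cot τ) volume 0 x)
    (hs : ∀ τ ∈ Ioo 0 x, 0 < s τ) : 0 < cotIntegral s x :=
  intervalIntegral_pos_of_pos_on hint
    (fun τ hτ => mul_pos (hs τ hτ) (cot_pos_of_mem_Ioo ⟨hτ.1, hτ.2.trans hx.2⟩)) hx.1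

lemma cotIntegral_le_mul {K : ℝ} (hx0 : 0 ≤ x) (hx : x < π / 2)
    (hint : IntervalIntegrable (fun τ => s τ * cot τ) volume 0 x) (hK : 0 ≤ K)
    (hs : ∀ τ ∈ Ioo 0 x, s τ ≤ K * τ) : cotIntegral s x ≤ K * x := by
  have hle : ∀ τ ∈ Ioo 0 x, s τ * cot τ ≤ K := fun τ hτ => by
    have hτ' : τ ∈ Ioo 0 (π / 2) := ⟨hτ.1, hτ.2.trans hx⟩
    calc s τ * cot τ ≤ K * τ * cot τ :=
          mul_le_mul_of_nonneg_right (hs τ hτ) (cot_pos_of_mem_Ioo hτ').le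
      _ = K * (τ * cot τ) := mul_assoc _ _ _
      _ ≤ K := mul_le_of_le_one_right hK (mul_cot_le_one hτ')
  calc cotIntegral s x ≤ ∫ _ in (0 : ℝ)..x, K :=
        integral_mono_on_of_le_Ioo hx0 hint intervalIntegrable_const hle
    _ = K * x := by simp [mul_comm]

end cotIntegral

lemma one_le_of_tendsto_div_cotIntegral_of_pos {δ L : ℝ} {s : ℝ → ℝ} (hδ0 : 0 < δ)
    (hδ : δ < π / 2) (hspos : ∀ θ ∈ Ioo 0 δ, 0 < s θ) (hs0 : s 0 = 0)
    (hs' : HasDerivWithinAt s 0 (Ici 0) 0)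
    (hint : ∀ θ ∈ Ioo 0 δ, IntervalIntegrable (fun τ => s τ * cot τ) volume 0 θ)
    (hL : Tendsto (fun θ => s θ / cotIntegral s θ) (𝓝[>] 0) (𝓝 L)) : 1 ≤ L := by
  by_contra! hL1
  obtain ⟨ε, hLε, hε1⟩ := exists_between (max_lt hL1 one_pos)
  have hε0 : 0 ≤ ε := (le_max_right _ _).trans hLε.le
  have hsR := hL.eventually_lt_const ((le_max_left _ _).trans_lt hLε)
  have hsθ := (tendsto_div_nhdsGT_of_hasDerivWithinAt hs0 hs').eventually_lt_const one_pos
  obtain ⟨θ₀, hθ₀, hsub⟩ :=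
    mem_nhdsGT_iff_exists_Ioo_subset.mp ((hsR.and hsθ).and (Ioo_mem_nhdsGT hδ0))
  have hS : ∀ θ ∈ Ioo 0 θ₀, ∀ τ ∈ Ioo 0 θ, τ ∈ Ioo 0 θ₀ := fun θ hθ τ hτ =>
    ⟨hτ.1, hτ.2.trans hθ.2⟩
  have hR : ∀ θ ∈ Ioo 0 θ₀, 0 < cotIntegral s θ := fun θ hθ =>
    cotIntegral_pos ⟨hθ.1, (hsub hθ).2.2.trans hδ⟩ (hint θ (hsub hθ).2)
      fun τ hτ => hspos τ (hsub (hS θ hθ τ hτ)).2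
  have hbound : ∀ K, 0 ≤ K → ∀ θ ∈ Ioo 0 θ₀, (∀ τ ∈ Ioo 0 θ, s τ ≤ K * τ) →
      cotIntegral s θ ≤ K * θ := fun K hK θ hθ =>
    cotIntegral_le_mul hθ.1.le ((hsub hθ).2.2.trans hδ) (hint θ (hsub hθ).2) hK
  have hbase : ∀ θ ∈ Ioo 0 θ₀, cotIntegral s θ ≤ 1 * θ := fun θ hθ =>
    hbound 1 zero_le_one θ hθ fun τ hτ => by
      rw [one_mul]
      exact ((div_lt_one hτ.1).mp (hsub (hS θ hθ τ hτ)).1.2).le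
  have hstep : ∀ C, 0 ≤ C → (∀ θ ∈ Ioo 0 θ₀, cotIntegral s θ ≤ C * θ) →
      ∀ θ ∈ Ioo 0 θ₀, cotIntegral s θ ≤ ε * C * θ := fun C hC hRC θ hθ =>
    hbound (ε * C) (by positivity) θ hθ fun τ hτ => by
      have hτ := hS θ hθ τ hτ
      calc s τ ≤ ε * cotIntegral s τ := ((div_lt_iff₀ (hR τ hτ)).mp (hsub hτ).1.1).le
        _ ≤ ε * (C * τ) := mul_le_mul_of_nonneg_left (hRC τ hτ) hε0
        _ = ε * C * τ := (mul_assoc _ _ _).symm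
  have hmid : θ₀ / 2 ∈ Ioo 0 θ₀ := ⟨half_pos hθ₀, half_lt_self hθ₀⟩
  exact (hR _ hmid).not_ge
    (nonpos_of_le_mul_of_forall_le_mul_imp hε0 hε1 zero_le_one hbase hstep hmid)

lemma one_le_of_tendsto_div_cotIntegral {δ L : ℝ} {s : ℝ → ℝ} (hδ0 : 0 < δ)
    (hδ : δ < π / 2) (hs : ContinuousOn s (Ico 0 δ)) (hsne : ∀ θ ∈ Ioo 0 δ, s θ ≠ 0)
    (hs0 : s 0 = 0) (hs' : HasDerivWithinAt s 0 (Ici 0) 0)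
    (hint : ∀ θ ∈ Ioo 0 δ, IntervalIntegrable (fun τ => s τ * cot τ) volume 0 θ)
    (hL : Tendsto (fun θ => s θ / cotIntegral s θ) (𝓝[>] 0) (𝓝 L)) : 1 ≤ L := by
  rcases isPreconnected_Ioo.forall_pos_or_forall_neg (hs.mono Ioo_subset_Ico_self) hsne with
    hpos | hneg
  · exact one_le_of_tendsto_div_cotIntegral_of_pos hδ0 hδ hpos hs0 hs' hint hL
  · refine one_le_of_tendsto_div_cotIntegral_of_pos (s := -s) hδ0 hδ
      (fun θ hθ => neg_pos.mpr (hneg θ hθ)) (by rw [Pi.neg_apply, hs0, neg_zero])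
      (by simpa only [neg_zero] using hs'.neg) (fun θ hθ => ?_) ?_
    · convert (hint θ hθ).neg using 1
      ext τ
      simp only [Pi.neg_apply, neg_mul]
    · simpa only [Pi.neg_apply, cotIntegral_neg, neg_div_neg_eq] using hL

/-- Corollary for C³-smooth surfaces: if `s : [0,δ) → ℝ` is continuous, nowhere zero
on `(0,δ)`, `s(0) = 0`, differentiable at `0` (from the right) with `s'(0) = 0`, and
`μ(θ) = 1 + s(θ)/∫₀^θ s cot → μ_p` as `θ → 0⁺`, then `μ_p ≥ 2`. -/
theorem stmt_6 (δ μ_p : ℝ) (hδ0 : 0 < δ) (hδ : δ < Real.pi / 2)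
    (s : ℝ → ℝ) (hs : ContinuousOn s (Set.Ico 0 δ))
    (hsne : ∀ θ ∈ Set.Ioo 0 δ, s θ ≠ 0)
    (hs0 : s 0 = 0)
    (hs' : HasDerivWithinAt s 0 (Set.Ici 0) 0)
    (hint : ∀ θ ∈ Set.Ioo 0 δ,
      IntervalIntegrable (fun τ => s τ * Real.cot τ) MeasureTheory.volume 0 θ)
    (hμ : Filter.Tendsto (fun θ => 1 + s θ / ∫ τ in (0:ℝ)..θ, s τ * Real.cot τ)
      (nhdsWithin 0 (Set.Ioi 0)) (nhds μ_p)) :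
    2 ≤ μ_p := by
  have hL : Tendsto (fun θ => s θ / cotIntegral s θ) (𝓝[>] 0) (𝓝 (μ_p - 1)) := by
    simpa only [cotIntegral, add_sub_cancel_left] using hμ.sub_const 1
  linarith [one_le_of_tendsto_div_cotIntegral hδ0 hδ hs hsne hs0 hs' hint hL]
end

section
/- Let 0 < δ < π/2 and let s : [0,δ) → ℝ be twice differentiable at 0, continuous on [0,δ), nowhere zero on (0,δ), with s(0) = 0 and s'(0) = 0, and with ∫₀^θ |s(τ)·cot(τ)| dτ < ∞ for all θ ∈ (0,δ). Set R(θ) = ∫₀^θ s(τ)·cot(τ) dτ and μ(θ) = 1 + s(θ)/R(θ). If μ(θ) tends to a limit μ_p ∈ ℝ as θ → 0⁺, then μ_p ≥ 3. -/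
open Real Set Filter MeasureTheory

private lemma my_cot_pos {x : ℝ} (h1 : 0 < x) (h2 : x < Real.pi / 2) : 0 < Real.cot x := by
  rw [Real.cot_eq_cos_div_sin]
  have hpi := Real.pi_pos
  exact div_pos (Real.cos_pos_of_mem_Ioo ⟨by linarith, h2⟩)
    (Real.sin_pos_of_pos_of_lt_pi h1 (by linarith))

private lemma my_cot_le {x : ℝ} (h1 : 0 < x) (h2 : x < Real.pi / 2) : Real.cot x ≤ 1 / x := by
  have htan : x < Real.tan x := Real.lt_tan h1 h2
  have hc : Real.cot x = (Real.tan x)⁻¹ := by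
    rw [Real.cot_eq_cos_div_sin, Real.tan_eq_sin_div_cos, inv_div]
  rw [hc, one_div]
  exact inv_anti₀ h1 htan.le

private lemma my_cot_contOn : ContinuousOn Real.cot (Set.Ioo 0 Real.pi) := by
  have : ∀ x ∈ Set.Ioo 0 Real.pi, ContinuousAt Real.cot x := by
    intro x hx
    have hsin : Real.sin x ≠ 0 := (Real.sin_pos_of_pos_of_lt_pi hx.1 hx.2).ne'
    have h := (Real.continuous_cos.continuousAt (x := x)).div
      (Real.continuous_sin.continuousAt (x := x)) hsin
    have heq : Real.cos / Real.sin = Real.cot := by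
      funext y; simp only [Pi.div_apply]; rw [Real.cot_eq_cos_div_sin]
    rwa [heq] at h
  exact fun x hx => (this x hx).continuousWithinAt

private lemma aux_main (δ K μ_p : ℝ) (hδ0 : 0 < δ) (hδ : δ < Real.pi / 2)
    (s : ℝ → ℝ) (hs : ContinuousOn s (Set.Ico 0 δ))
    (hpos : ∀ θ ∈ Set.Ioo 0 δ, 0 < s θ)
    (hbound : ∀ θ ∈ Set.Ico 0 δ, |s θ| ≤ K * θ ^ 2)
    (hint : ∀ θ ∈ Set.Ioo 0 δ,
      IntervalIntegrable (fun τ => s τ * Real.cot τ) MeasureTheory.volume 0 θ)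
    (hμ : Filter.Tendsto (fun θ => 1 + s θ / ∫ τ in (0:ℝ)..θ, s τ * Real.cot τ)
      (nhdsWithin 0 (Set.Ioi 0)) (nhds μ_p)) :
    3 ≤ μ_p := by
  have hpi := Real.pi_pos
  set R : ℝ → ℝ := fun θ => ∫ τ in (0:ℝ)..θ, s τ * Real.cot τ with hRdef
  have hK : 0 ≤ K := by
    have h1 := hbound (δ/2) ⟨by linarith, by linarith⟩
    nlinarith [abs_nonneg (s (δ/2)), pow_pos (show (0:ℝ) < δ/2 by linarith) 2]
  have hs00 : s 0 = 0 := by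
    have h1 := hbound 0 ⟨le_refl 0, hδ0⟩
    simp only [ne_eq, OfNat.ofNat_ne_zero, not_false_eq_true, zero_pow, mul_zero] at h1
    exact abs_eq_zero.mp (le_antisymm h1 (abs_nonneg _))
  -- continuity of integrand on (0,δ)
  have hcontOn : ContinuousOn (fun τ => s τ * Real.cot τ) (Set.Ioo 0 δ) := by
    apply ContinuousOn.mul (hs.mono (fun x hx => ⟨hx.1.le, hx.2⟩))
    exact my_cot_contOn.mono (fun x hx => ⟨hx.1, by linarith [hx.2]⟩)
  -- derivative of R
  have hRderiv : ∀ x ∈ Set.Ioo 0 δ, HasDerivAt R (s x * Real.cot x) x := by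
    intro x hx
    exact intervalIntegral.integral_hasDerivAt_right (hint x hx)
      (hcontOn.stronglyMeasurableAtFilter isOpen_Ioo x hx)
      (hcontOn.continuousAt (Ioo_mem_nhds hx.1 hx.2))
  -- positivity of R
  have hRpos : ∀ x ∈ Set.Ioo 0 δ, 0 < R x := by
    intro x hx
    apply intervalIntegral.intervalIntegral_pos_of_pos_on (hint x hx) _ hx.1
    intro τ hτ
    have hτδ : τ < δ := hτ.2.trans hx.2
    exact mul_pos (hpos τ ⟨hτ.1, hτδ⟩) (my_cot_pos hτ.1 (by linarith))
  -- upper bound for R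
  have hRle : ∀ x ∈ Set.Ioo 0 δ, R x ≤ K * x ^ 2 := by
    intro x hx
    have h1 : R x ≤ ∫ τ in (0:ℝ)..x, K * τ := by
      apply intervalIntegral.integral_mono_on hx.1.le (hint x hx)
        ((continuous_const.mul continuous_id).intervalIntegrable 0 x)
      intro τ hτ
      rcases eq_or_lt_of_le hτ.1 with h | h
      · simp [← h, hs00]
      · have hτδ : τ < δ := lt_of_le_of_lt hτ.2 hx.2
        have hcle := my_cot_le h (by linarith)
        have hcp := my_cot_pos h (by linarith)
        have h2 : s τ ≤ K * τ ^ 2 := le_trans (le_abs_self _) (hbound τ ⟨h.le, hτδ⟩)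
        calc s τ * Real.cot τ ≤ (K * τ ^ 2) * Real.cot τ :=
              mul_le_mul_of_nonneg_right h2 hcp.le
          _ ≤ (K * τ ^ 2) * (1 / τ) := mul_le_mul_of_nonneg_left hcle (by positivity)
          _ = K * τ := by field_simp
    have h2 : (∫ τ in (0:ℝ)..x, K * τ) = K * (x ^ 2 / 2) := by
      rw [intervalIntegral.integral_const_mul, integral_id]; ring
    nlinarith [sq_nonneg x]
  -- limit of s/R
  have hL : Filter.Tendsto (fun θ => s θ / R θ) (nhdsWithin 0 (Set.Ioi 0)) (nhds (μ_p - 1)) := by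
    have h := hμ.sub_const 1
    simpa using h
  set L := μ_p - 1 with hLdef
  have hL0 : 0 ≤ L := by
    refine ge_of_tendsto hL ?_
    filter_upwards [Ioo_mem_nhdsGT_of_mem (show (0:ℝ) ∈ Set.Ico 0 δ from ⟨le_refl 0, hδ0⟩)]
      with θ hθ
    exact (div_pos (hpos θ hθ) (hRpos θ hθ)).le
  by_contra hcon
  push_neg at hcon
  have hL2 : L < 2 := by rw [hLdef]; linarith
  set L' := (L + 2) / 2 with hL'def
  have hL'1 : L < L' := by rw [hL'def]; linarith
  have hL'2 : L' < 2 := by rw [hL'def]; linarith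
  have hL'0 : 0 < L' := by rw [hL'def]; linarith
  -- eventually s/R < L'
  have hev : ∀ᶠ θ in nhdsWithin 0 (Set.Ioi 0), s θ / R θ < L' ∧ θ ∈ Set.Ioo 0 δ := by
    refine (hL.eventually_lt_const hL'1).and ?_
    exact Ioo_mem_nhdsGT_of_mem (show (0:ℝ) ∈ Set.Ico 0 δ from ⟨le_refl 0, hδ0⟩)
  rw [Filter.eventually_iff, mem_nhdsGT_iff_exists_Ioo_subset] at hev
  obtain ⟨u, hu, hsub⟩ := hev
  rw [Set.mem_Ioi] at hu
  set θ₀ := min u δ / 2 with hθ₀def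
  have hθ₀pos : 0 < θ₀ := by
    rw [hθ₀def]; rcases le_total u δ with h | h <;> simp [min_eq_left, min_eq_right, h] <;> linarith
  have hθ₀u : θ₀ < u := by
    have := min_le_left u δ; rw [hθ₀def]; linarith
  have hθ₀δ : θ₀ < δ := by
    have := min_le_right u δ; rw [hθ₀def]; linarith
  have hprop : ∀ θ ∈ Set.Ioc 0 θ₀, s θ / R θ < L' ∧ θ ∈ Set.Ioo 0 δ :=
    fun θ hθ => hsub ⟨hθ.1, lt_of_le_of_lt hθ.2 hθ₀u⟩
  -- the function g
  set g : ℝ → ℝ := fun θ => Real.log (R θ) - L' * Real.log θ with hgdef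
  have hg : ∀ x ∈ Set.Ioc 0 θ₀, HasDerivAt g (s x * Real.cot x / R x - L' / x) x := by
    intro x hx
    have hxδ : x ∈ Set.Ioo 0 δ := (hprop x hx).2
    have h1 : HasDerivAt (fun θ => Real.log (R θ)) (s x * Real.cot x / R x) x :=
      (hRderiv x hxδ).log (hRpos x hxδ).ne'
    have h2 : HasDerivAt (fun θ => L' * Real.log θ) (L' * x⁻¹) x :=
      (Real.hasDerivAt_log hx.1.ne').const_mul L'
    have h3 := h1.sub h2; rw [div_eq_mul_inv L' x]; exact h3
  have hgd : ∀ x ∈ Set.Ioc 0 θ₀, s x * Real.cot x / R x - L' / x ≤ 0 := by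
    intro x hx
    have hxδ : x ∈ Set.Ioo 0 δ := (hprop x hx).2
    have hRx := hRpos x hxδ
    have hsx := hpos x hxδ
    have hxpi : x < Real.pi / 2 := by linarith [hxδ.2]
    have hcle := my_cot_le hx.1 hxpi
    have hcp := my_cot_pos hx.1 hxpi
    have hq : s x < L' * R x := (div_lt_iff₀ hRx).mp (hprop x hx).1
    rw [sub_nonpos, div_le_div_iff₀ hRx hx.1]
    have h3 : Real.cot x * x ≤ 1 := by
      have := mul_le_mul_of_nonneg_right hcle hx.1.le
      rwa [one_div, inv_mul_cancel₀ hx.1.ne'] at this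
    nlinarith [mul_le_mul_of_nonneg_left h3 hsx.le]
  -- monotonicity
  have hmono : ∀ θ ∈ Set.Ioc 0 θ₀, g θ₀ ≤ g θ := by
    intro θ hθ
    have hanti : AntitoneOn g (Set.Icc θ θ₀) := by
      apply antitoneOn_of_deriv_nonpos (convex_Icc θ θ₀)
      · intro x hx
        exact (hg x ⟨lt_of_lt_of_le hθ.1 hx.1, hx.2⟩).continuousAt.continuousWithinAt
      · intro x hx
        rw [interior_Icc] at hx
        exact ((hg x ⟨lt_trans hθ.1 hx.1, hx.2.le⟩).differentiableAt).differentiableWithinAt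
      · intro x hx
        rw [interior_Icc] at hx
        have hx' : x ∈ Set.Ioc 0 θ₀ := ⟨lt_trans hθ.1 hx.1, hx.2.le⟩
        rw [(hg x hx').deriv]
        exact hgd x hx'
    exact hanti ⟨le_refl θ, hθ.2⟩ ⟨hθ.2, le_refl θ₀⟩ hθ.2
  -- lower bound for R
  have hθ₀δ' : θ₀ ∈ Set.Ioo 0 δ := ⟨hθ₀pos, hθ₀δ⟩
  set c := R θ₀ / θ₀ ^ L' with hcdef
  have hcpos : 0 < c := div_pos (hRpos θ₀ hθ₀δ') (Real.rpow_pos_of_pos hθ₀pos L')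
  have hlower : ∀ θ ∈ Set.Ioc 0 θ₀, c * θ ^ L' ≤ R θ := by
    intro θ hθ
    have h1 : g θ₀ ≤ g θ := hmono θ hθ
    have hRθ := hRpos θ (hprop θ hθ).2
    have hθp := hθ.1
    have hrp := Real.rpow_pos_of_pos hθp L'
    have hlog : Real.log (c * θ ^ L') ≤ Real.log (R θ) := by
      rw [Real.log_mul hcpos.ne' hrp.ne', Real.log_rpow hθp, hcdef,
        Real.log_div (hRpos θ₀ hθ₀δ').ne' (Real.rpow_pos_of_pos hθ₀pos L').ne',
        Real.log_rpow hθ₀pos]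
      have h2 : Real.log (R θ₀) - L' * Real.log θ₀ ≤ Real.log (R θ) - L' * Real.log θ := h1
      linarith
    exact (Real.log_le_log_iff (mul_pos hcpos hrp) hRθ).mp hlog
  -- contradiction
  set q := 2 - L' with hqdef
  have hqpos : 0 < q := by rw [hqdef]; linarith
  set K' := K + 1 with hK'def
  have hK'pos : 0 < K' := by rw [hK'def]; linarith
  have hub : ∀ θ ∈ Set.Ioc 0 θ₀, c ≤ K' * θ ^ q := by
    intro θ hθ
    have hθδ := (hprop θ hθ).2
    have hp := Real.rpow_pos_of_pos hθ.1 L'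
    have hpow2 : θ ^ (2:ℕ) = θ ^ L' * θ ^ q := by
      rw [← Real.rpow_natCast θ 2, ← Real.rpow_add hθ.1, hqdef]
      norm_num
    have h1 : c * θ ^ L' ≤ (K' * θ ^ q) * θ ^ L' := by
      calc c * θ ^ L' ≤ R θ := hlower θ hθ
        _ ≤ K * θ ^ 2 := hRle θ hθδ
        _ ≤ K' * θ ^ 2 := by nlinarith [sq_nonneg θ]
        _ = (K' * θ ^ q) * θ ^ L' := by rw [hpow2]; ring
    exact le_of_mul_le_mul_right h1 hp
  set ε := c / (2 * K') with hεdef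
  have hεpos : 0 < ε := by positivity
  set θ₁ := min θ₀ (ε ^ (1/q)) with hθ₁def
  have hθ₁pos : 0 < θ₁ := lt_min hθ₀pos (Real.rpow_pos_of_pos hεpos _)
  have h5 : c ≤ K' * θ₁ ^ q := hub θ₁ ⟨hθ₁pos, min_le_left _ _⟩
  have h6 : θ₁ ^ q ≤ (ε ^ (1/q)) ^ q :=
    Real.rpow_le_rpow hθ₁pos.le (min_le_right _ _) hqpos.le
  have h7 : (ε ^ (1/q)) ^ q = ε := by
    rw [← Real.rpow_mul hεpos.le, one_div, inv_mul_cancel₀ hqpos.ne', Real.rpow_one]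
  have h8 : K' * ε = c / 2 := by
    rw [hεdef]; field_simp
  nlinarith [mul_le_mul_of_nonneg_left (h7 ▸ h6) hK'pos.le]

/-- Corollary for C⁴-smooth surfaces: if `s : [0,δ) → ℝ` is continuous, nowhere zero
on `(0,δ)`, twice differentiable at `0` with `s(0) = 0` and `s'(0) = 0`, and
`μ(θ) = 1 + s(θ)/∫₀^θ s cot → μ_p` as `θ → 0⁺`, then `μ_p ≥ 3`. -/
theorem stmt_7 (δ μ_p : ℝ) (hδ0 : 0 < δ) (hδ : δ < Real.pi / 2)
    (s s' : ℝ → ℝ) (hs : ContinuousOn s (Set.Ico 0 δ))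
    (hsne : ∀ θ ∈ Set.Ioo 0 δ, s θ ≠ 0)
    (hs0 : s 0 = 0)
    (hs' : ∀ θ ∈ Set.Ico 0 δ, HasDerivWithinAt s (s' θ) (Set.Ici 0) θ)
    (hs'0 : s' 0 = 0)
    (s'' : ℝ) (hs'' : HasDerivWithinAt s' s'' (Set.Ici 0) 0)
    (hint : ∀ θ ∈ Set.Ioo 0 δ,
      IntervalIntegrable (fun τ => s τ * Real.cot τ) MeasureTheory.volume 0 θ)
    (hμ : Filter.Tendsto (fun θ => 1 + s θ / ∫ τ in (0:ℝ)..θ, s τ * Real.cot τ)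
      (nhdsWithin 0 (Set.Ioi 0)) (nhds μ_p)) :
    3 ≤ μ_p := by

  set K := |s''| + 1 with hKdef
  have hKpos : 0 < K := by positivity
  -- slope of s' tends to s''
  have hslope : Filter.Tendsto (fun θ => s' θ / θ) (nhdsWithin 0 (Set.Ioi 0)) (nhds s'') := by
    have h := hasDerivWithinAt_iff_tendsto_slope.mp hs''
    rw [show Set.Ici (0:ℝ) \ {0} = Set.Ioi 0 from Set.Ici_sdiff_left] at h
    refine h.congr (fun θ => ?_)
    simp [slope_def_field, hs'0, div_eq_mul_inv]
  -- eventually |s' θ| ≤ K θ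
  have hevs' : ∀ᶠ θ in nhdsWithin 0 (Set.Ioi 0), |s' θ| ≤ K * θ := by
    have h2 : ∀ᶠ θ in nhdsWithin 0 (Set.Ioi 0), |s' θ / θ| < K := by
      refine (hslope.abs).eventually_lt_const ?_
      rw [hKdef]; linarith [abs_nonneg s'']
    filter_upwards [h2, self_mem_nhdsWithin] with θ h hθ
    rw [Set.mem_Ioi] at hθ
    rw [abs_div, abs_of_pos hθ, div_lt_iff₀ hθ] at h
    linarith
  rw [Filter.eventually_iff, mem_nhdsGT_iff_exists_Ioo_subset] at hevs'
  obtain ⟨u, hu, hsub⟩ := hevs'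
  rw [Set.mem_Ioi] at hu
  set δ₁ := min u δ / 2 with hδ₁def
  have hδ₁pos : 0 < δ₁ := by
    rw [hδ₁def]; rcases le_total u δ with h | h <;> simp [min_eq_left, min_eq_right, h] <;> linarith
  have hδ₁u : δ₁ < u := by have := min_le_left u δ; rw [hδ₁def]; linarith
  have hδ₁δ : δ₁ < δ := by have := min_le_right u δ; rw [hδ₁def]; linarith
  -- quadratic bound for s on [0, δ₁)
  have hbound : ∀ θ ∈ Set.Ico 0 δ₁, |s θ| ≤ K * θ ^ 2 := by
    intro θ hθ
    rcases eq_or_lt_of_le hθ.1 with h | h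
    · simp [← h, hs0]
    · have hθδ : θ < δ := lt_trans hθ.2 hδ₁δ
      have hd : ∀ τ ∈ Set.Icc 0 θ, HasDerivWithinAt s (s' τ) (Set.Icc 0 θ) τ := by
        intro τ hτ
        exact (hs' τ ⟨hτ.1, lt_of_le_of_lt hτ.2 hθδ⟩).mono (fun y hy => hy.1)
      have hbd : ∀ τ ∈ Set.Icc 0 θ, ‖s' τ‖ ≤ K * θ := by
        intro τ hτ
        rcases eq_or_lt_of_le hτ.1 with h' | h'
        · rw [← h']; simp [hs'0]; positivity
        · have hτu : τ < u := lt_of_le_of_lt hτ.2 (lt_trans hθ.2 hδ₁u)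
          have := hsub ⟨h', hτu⟩
          calc ‖s' τ‖ = |s' τ| := rfl
            _ ≤ K * τ := this
            _ ≤ K * θ := by nlinarith [hτ.2]
      have hm := Convex.norm_image_sub_le_of_norm_hasDerivWithin_le hd hbd (convex_Icc 0 θ)
        (Set.left_mem_Icc.mpr h.le) (Set.right_mem_Icc.mpr h.le)
      rw [hs0, sub_zero, sub_zero] at hm
      calc |s θ| = ‖s θ‖ := rfl
        _ ≤ K * θ * ‖θ‖ := hm
        _ = K * θ ^ 2 := by rw [Real.norm_eq_abs, abs_of_pos h]; ring
  -- sign dichotomy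
  have hsign : (∀ θ ∈ Set.Ioo 0 δ₁, 0 < s θ) ∨ (∀ θ ∈ Set.Ioo 0 δ₁, s θ < 0) := by
    have hIVT : ∀ a ∈ Set.Ioo 0 δ, ∀ b ∈ Set.Ioo 0 δ, s a < 0 → 0 < s b → False := by
      intro a ha b hb hsa hsb
      have hsubset : Set.uIcc a b ⊆ Set.Ioo 0 δ := by
        rw [Set.uIcc_eq_union]
        exact Set.union_subset (fun x hx => ⟨lt_of_lt_of_le ha.1 hx.1, lt_of_le_of_lt hx.2 hb.2⟩)
          (fun x hx => ⟨lt_of_lt_of_le hb.1 hx.1, lt_of_le_of_lt hx.2 ha.2⟩)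
      have hcont : ContinuousOn s (Set.uIcc a b) :=
        hs.mono (fun x hx => ⟨(hsubset hx).1.le, (hsubset hx).2⟩)
      have h0 : (0:ℝ) ∈ Set.uIcc (s a) (s b) := by
        rw [Set.mem_uIcc]; left; exact ⟨hsa.le, hsb.le⟩
      obtain ⟨x, hx, hsx⟩ := intermediate_value_uIcc hcont h0
      exact hsne x (hsubset hx) hsx
    have hc : δ₁ / 2 ∈ Set.Ioo 0 δ := ⟨by linarith, by linarith⟩
    rcases lt_trichotomy (s (δ₁/2)) 0 with h | h | h
    · right
      intro θ hθ
      have hθδ : θ ∈ Set.Ioo 0 δ := ⟨hθ.1, lt_trans hθ.2 hδ₁δ⟩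
      rcases lt_trichotomy (s θ) 0 with h' | h' | h'
      · exact h'
      · exact absurd h' (hsne θ hθδ)
      · exact absurd (hIVT _ hc _ hθδ h h') (fun x => x)
    · exact absurd h (hsne _ hc)
    · left
      intro θ hθ
      have hθδ : θ ∈ Set.Ioo 0 δ := ⟨hθ.1, lt_trans hθ.2 hδ₁δ⟩
      rcases lt_trichotomy (s θ) 0 with h' | h' | h'
      · exact absurd (hIVT _ hθδ _ hc h' h) (fun x => x)
      · exact absurd h' (hsne θ hθδ)
      · exact h'
  have hδ₁π : δ₁ < Real.pi / 2 := lt_trans hδ₁δ hδ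
  have hIooSub : Set.Ioo 0 δ₁ ⊆ Set.Ioo 0 δ := fun x hx => ⟨hx.1, lt_trans hx.2 hδ₁δ⟩
  rcases hsign with hpos | hneg
  · exact aux_main δ₁ K μ_p hδ₁pos hδ₁π s
      (hs.mono (fun x hx => ⟨hx.1, lt_trans hx.2 hδ₁δ⟩)) hpos hbound
      (fun θ hθ => hint θ (hIooSub hθ)) hμ
  · apply aux_main δ₁ K μ_p hδ₁pos hδ₁π (fun θ => -s θ)
      (hs.neg.mono (fun x hx => ⟨hx.1, lt_trans hx.2 hδ₁δ⟩))
      (fun θ hθ => by simpa using (hneg θ hθ))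
      (fun θ hθ => by simpa using hbound θ hθ)
    · intro θ hθ
      have h := (hint θ (hIooSub hθ)).neg
      simpa [neg_mul, Pi.neg_def] using h
    · refine hμ.congr (fun θ => ?_)
      have hI : (∫ τ in (0:ℝ)..θ, (-s τ) * Real.cot τ)
          = -∫ τ in (0:ℝ)..θ, s τ * Real.cot τ := by
        rw [← intervalIntegral.integral_neg]
        congr 1; funext τ; ring
      rw [hI, neg_div_neg_eq]
end

section
/- Let I ⊆ (0,π) be an open interval, let r₂ : I → ℝ be continuous and let r₁ : I → ℝ be differentiable with r₁'(θ) = (r₂(θ) − r₁(θ))·cot(θ) for all θ ∈ I. Then there exists a twice continuously differentiable function r : I → ℝ such that r₁(θ) = r(θ) + r'(θ)·cot(θ) and r₂(θ) = r(θ) + r''(θ) for all θ ∈ I. -/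
/-!
Reconstruct the meridian profile `θ ↦ (x θ, z θ)` (distance to the axis, height) of the surface
instead of solving `r + r'' = r₂` directly. Since `x = r₁ sin θ`, the Codazzi–Mainardi equation
says exactly that `x' = r₂ cos θ`; choosing a height `z` with `z' = -r₂ sin θ`, the support
function `r = x sin θ + z cos θ` of this curve has `r' = x cos θ - z sin θ`, `r'' = r₂ - r`, and
`r + r' cot θ = x / sin θ = r₁`.
-/

open Real

theorem exists_hasDerivAt_of_continuousOn {E : Type*} [NormedAddCommGroup E] [NormedSpace ℝ E]
    [CompleteSpace E] {f : ℝ → E} {s : Set ℝ} (hs : IsOpen s) (hs' : s.OrdConnected)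
    (hf : ContinuousOn f s) : ∃ F : ℝ → E, ∀ x ∈ s, HasDerivAt F (f x) x := by
  rcases s.eq_empty_or_nonempty with rfl | ⟨a, ha⟩
  · exact ⟨0, by simp⟩
  refine ⟨fun x => ∫ t in a..x, f t, fun x hx => ?_⟩
  exact intervalIntegral.integral_hasDerivAt_right
    ((hf.mono (hs'.uIcc_subset ha hx)).intervalIntegrable)
    (hf.stronglyMeasurableAtFilter hs x hx) (hf.continuousAt (hs.mem_nhds hx))

noncomputable def supportOfProfile (x z : ℝ → ℝ) (θ : ℝ) : ℝ := x θ * sin θ + z θ * cos θ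

section Profile

variable {x z f : ℝ → ℝ} {θ : ℝ}

theorem hasDerivAt_supportOfProfile (hx : HasDerivAt x (f θ * cos θ) θ)
    (hz : HasDerivAt z (-(f θ * sin θ)) θ) :
    HasDerivAt (supportOfProfile x z) (x θ * cos θ - z θ * sin θ) θ :=
  ((hx.mul (hasDerivAt_sin θ)).add (hz.mul (hasDerivAt_cos θ))).congr_deriv (by ring)

theorem hasDerivAt_deriv_supportOfProfile (hx : HasDerivAt x (f θ * cos θ) θ)
    (hz : HasDerivAt z (-(f θ * sin θ)) θ) :
    HasDerivAt (fun t => x t * cos t - z t * sin t) (f θ - supportOfProfile x z θ) θ := by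
  refine ((hx.mul (hasDerivAt_cos θ)).sub (hz.mul (hasDerivAt_sin θ))).congr_deriv ?_
  rw [supportOfProfile]
  linear_combination f θ * sin_sq_add_cos_sq θ

theorem supportOfProfile_add_mul_cot (hθ : sin θ ≠ 0) :
    supportOfProfile x z θ + (x θ * cos θ - z θ * sin θ) * cot θ = x θ / sin θ := by
  rw [supportOfProfile, cot_eq_cos_div_sin]
  field_simp
  linear_combination x θ * sin_sq_add_cos_sq θ

end Profile

theorem hasDerivAt_mul_sin_of_codazzi {r₁ r₂ : ℝ → ℝ} {θ : ℝ} (hθ : sin θ ≠ 0)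
    (hr₁ : HasDerivAt r₁ ((r₂ θ - r₁ θ) * cot θ) θ) :
    HasDerivAt (fun t => r₁ t * sin t) (r₂ θ * cos θ) θ := by
  refine (hr₁.mul (hasDerivAt_sin θ)).congr_deriv ?_
  rw [cot_eq_cos_div_sin]
  field_simp
  ring

/-- Converse of the derived Codazzi–Mainardi equation: if `r₁' = (r₂ - r₁) cot θ` on an
open interval `I ⊆ (0, π)` with `r₂` continuous, then there is a twice continuously
differentiable support function `r` with `r₁ = r + r' cot θ` and `r₂ = r + r''` on `I`. -/
theorem stmt_8 (lo hi : ℝ) (hI : Set.Ioo lo hi ⊆ Set.Ioo 0 Real.pi)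
    (r₁ r₂ : ℝ → ℝ) (hr₂ : ContinuousOn r₂ (Set.Ioo lo hi))
    (hr₁ : ∀ θ ∈ Set.Ioo lo hi, HasDerivAt r₁ ((r₂ θ - r₁ θ) * Real.cot θ) θ) :
    ∃ r r' r'' : ℝ → ℝ,
      (∀ θ ∈ Set.Ioo lo hi, HasDerivAt r (r' θ) θ) ∧
      (∀ θ ∈ Set.Ioo lo hi, HasDerivAt r' (r'' θ) θ) ∧
      ContinuousOn r'' (Set.Ioo lo hi) ∧
      (∀ θ ∈ Set.Ioo lo hi, r₁ θ = r θ + r' θ * Real.cot θ ∧ r₂ θ = r θ + r'' θ) := by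
  have hsin : ∀ θ ∈ Set.Ioo lo hi, sin θ ≠ 0 := fun θ hθ =>
    (sin_pos_of_pos_of_lt_pi (hI hθ).1 (hI hθ).2).ne'
  set x : ℝ → ℝ := fun t => r₁ t * sin t
  have hx θ (hθ : θ ∈ Set.Ioo lo hi) : HasDerivAt x (r₂ θ * cos θ) θ :=
    hasDerivAt_mul_sin_of_codazzi (hsin θ hθ) (hr₁ θ hθ)
  obtain ⟨z, hz⟩ := exists_hasDerivAt_of_continuousOn isOpen_Ioo Set.ordConnected_Ioo
    (hr₂.mul continuous_sin.continuousOn).neg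
  have hr θ (hθ : θ ∈ Set.Ioo lo hi) := hasDerivAt_supportOfProfile (hx θ hθ) (hz θ hθ)
  refine ⟨supportOfProfile x z, fun t => x t * cos t - z t * sin t,
    fun t => r₂ t - supportOfProfile x z t, hr,
    fun θ hθ => hasDerivAt_deriv_supportOfProfile (hx θ hθ) (hz θ hθ),
    hr₂.sub fun θ hθ => (hr θ hθ).continuousAt.continuousWithinAt,
    fun θ hθ => ⟨?_, by ring⟩⟩
  rw [supportOfProfile_add_mul_cot (hsin θ hθ)]
  exact (mul_div_cancel_right₀ _ (hsin θ hθ)).symm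
end

section
/- Let I ⊆ (0,π) be an open interval, let r₂ : I → ℝ be continuous and r₁ : I → ℝ differentiable with r₁'(θ) = (r₂(θ) − r₁(θ))·cot(θ) and r₂(θ) ≠ r₁(θ) for all θ ∈ I. Let a, b, c, d ∈ ℝ with a·d − b·c = 1, and assume c·r₁(θ) + d ≠ 0 and c·r₂(θ) + d ≠ 0 for all θ ∈ I. Define r̃ᵢ(θ) = (a·rᵢ(θ) + b)/(c·rᵢ(θ) + d) for i = 1, 2, and let θ̃ : I → (0,π) be differentiable. Then the transformed Codazzi–Mainardi equation r̃₁'(θ)·sin(θ̃(θ)) = (r̃₂(θ) − r̃₁(θ))·cos(θ̃(θ))·θ̃'(θ) holds for all θ ∈ I if and only if there exists a constant A ≠ 0 such that sin(θ̃(θ)) = A·sin(θ)·(c·r₁(θ) + d) for all θ ∈ I. -/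
/-!
Write `k_i = c r_i + d`. Since `ad - bc = 1`, the Möbius map has derivative `1 / (c r + d)²` and
`r̃₂ - r̃₁ = (r₂ - r₁) / (k₁ k₂)`, so after cancelling the nonzero factor `r₂ - r₁` the transformed
equation says `(sin θ̃)' · sin θ · k₁ = sin θ̃ · cos θ · k₂`. By the Codazzi–Mainardi equation,
`(sin θ · k₁)' = cos θ · k₂`, so this is the vanishing of the Wronskian of `sin θ̃` and
`sin θ · k₁`, i.e. their ratio is a (nonzero) constant.
-/

open Real Set

lemma hasDerivAt_moebius {f : ℝ → ℝ} {f' x a b c d : ℝ} (habcd : a * d - b * c = 1)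
    (hf : HasDerivAt f f' x) (hx : c * f x + d ≠ 0) :
    HasDerivAt (fun u => (a * f u + b) / (c * f u + d)) (f' / (c * f x + d) ^ 2) x := by
  refine (((hf.const_mul a).add_const b).div ((hf.const_mul c).add_const d) hx).congr_deriv ?_
  congr 1
  linear_combination f' * habcd

lemma moebius_sub_moebius {x y a b c d : ℝ} (habcd : a * d - b * c = 1)
    (hx : c * x + d ≠ 0) (hy : c * y + d ≠ 0) :
    (a * y + b) / (c * y + d) - (a * x + b) / (c * x + d) =
      (y - x) / ((c * y + d) * (c * x + d)) := by
  rw [div_sub_div _ _ hy hx]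
  congr 1
  linear_combination (y - x) * habcd

lemma exists_ne_zero_eq_const_mul_iff_wronskian_eq_zero {s : Set ℝ} (hs : IsOpen s)
    (hs' : IsPreconnected s) {f g f' g' : ℝ → ℝ}
    (hf : ∀ x ∈ s, HasDerivAt f (f' x) x) (hg : ∀ x ∈ s, HasDerivAt g (g' x) x)
    (hf0 : ∀ x ∈ s, f x ≠ 0) (hg0 : ∀ x ∈ s, g x ≠ 0) :
    (∀ x ∈ s, f' x * g x = f x * g' x) ↔ ∃ A ≠ 0, ∀ x ∈ s, f x = A * g x := by
  constructor
  · intro hW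
    rcases s.eq_empty_or_nonempty with rfl | ⟨x₀, hx₀⟩
    · exact ⟨1, one_ne_zero, fun x hx => hx.elim⟩
    have hratio : ∀ x ∈ s, HasDerivAt (f / g) 0 x := fun x hx => by
      simpa only [hW x hx, sub_self, zero_div] using (hf x hx).div (hg x hx) (hg0 x hx)
    refine ⟨f x₀ / g x₀, div_ne_zero (hf0 x₀ hx₀) (hg0 x₀ hx₀), fun x hx => ?_⟩
    have hconst : f x / g x = f x₀ / g x₀ :=
      hs.is_const_of_deriv_eq_zero (f := f / g) hs'
        (fun y hy => (hratio y hy).differentiableAt.differentiableWithinAt)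
        (fun y hy => (hratio y hy).deriv) hx hx₀
    rw [← hconst, div_mul_cancel₀ _ (hg0 x hx)]
  · rintro ⟨A, -, hA⟩ x hx
    have hfA : f =ᶠ[nhds x] fun u => A * g u :=
      Filter.eventually_of_mem (hs.mem_nhds hx) hA
    have hf' : f' x = A * g' x :=
      (hf x hx).unique (((hg x hx).const_mul A).congr_of_eventuallyEq hfA)
    rw [hf', hA x hx]
    ring

lemma hasDerivAt_sin_mul_of_codazziMainardi {r₁ r₂ : ℝ → ℝ} {θ c d : ℝ}
    (hr₁ : HasDerivAt r₁ ((r₂ θ - r₁ θ) * cot θ) θ) (hsin : sin θ ≠ 0) :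
    HasDerivAt (fun u => sin u * (c * r₁ u + d)) (cos θ * (c * r₂ θ + d)) θ := by
  refine ((hasDerivAt_sin θ).mul ((hr₁.const_mul c).add_const d)).congr_deriv ?_
  rw [cot_eq_cos_div_sin]
  field_simp
  ring

/-- `S` and `S'` stand for `sin θ̃` and its derivative `cos θ̃ · θ̃'`. -/
lemma moebius_codazziMainardi_iff {r₁ r₂ : ℝ → ℝ} {θ a b c d : ℝ} (S S' : ℝ)
    (hr₁ : HasDerivAt r₁ ((r₂ θ - r₁ θ) * cot θ) θ) (hne : r₂ θ ≠ r₁ θ)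
    (habcd : a * d - b * c = 1) (h1 : c * r₁ θ + d ≠ 0) (h2 : c * r₂ θ + d ≠ 0)
    (hsin : sin θ ≠ 0) :
    deriv (fun u => (a * r₁ u + b) / (c * r₁ u + d)) θ * S =
        ((a * r₂ θ + b) / (c * r₂ θ + d) - (a * r₁ θ + b) / (c * r₁ θ + d)) * S' ↔
      S' * (sin θ * (c * r₁ θ + d)) = S * (cos θ * (c * r₂ θ + d)) := by
  have hΔ : r₂ θ - r₁ θ ≠ 0 := sub_ne_zero.mpr hne
  rw [(hasDerivAt_moebius habcd hr₁ h1).deriv, moebius_sub_moebius habcd h1 h2,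
    cot_eq_cos_div_sin, ← sub_eq_zero, ← sub_eq_zero (a := S' * _)]
  have hfactor : (r₂ θ - r₁ θ) * (cos θ / sin θ) / (c * r₁ θ + d) ^ 2 * S -
        (r₂ θ - r₁ θ) / ((c * r₂ θ + d) * (c * r₁ θ + d)) * S' =
      -((r₂ θ - r₁ θ) / (sin θ * (c * r₁ θ + d) ^ 2 * (c * r₂ θ + d))) *
        (S' * (sin θ * (c * r₁ θ + d)) - S * (cos θ * (c * r₂ θ + d))) := by
    generalize c * r₁ θ + d = k₁ at h1 ⊢
    generalize c * r₂ θ + d = k₂ at h2 ⊢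
    field_simp
    ring
  rw [hfactor, mul_eq_zero, or_iff_right (by simp [hΔ, hsin, h1, h2])]

theorem stmt_12_general (lo hi : ℝ) (hI : Set.Ioo lo hi ⊆ Set.Ioo 0 Real.pi)
    (r₁ r₂ : ℝ → ℝ)
    (hr₁ : ∀ θ ∈ Set.Ioo lo hi, HasDerivAt r₁ ((r₂ θ - r₁ θ) * Real.cot θ) θ)
    (hne : ∀ θ ∈ Set.Ioo lo hi, r₂ θ ≠ r₁ θ)
    (a b c d : ℝ) (habcd : a * d - b * c = 1)
    (h1 : ∀ θ ∈ Set.Ioo lo hi, c * r₁ θ + d ≠ 0)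
    (h2 : ∀ θ ∈ Set.Ioo lo hi, c * r₂ θ + d ≠ 0)
    (θt : ℝ → ℝ) (hθtmem : ∀ θ ∈ Set.Ioo lo hi, θt θ ∈ Set.Ioo 0 Real.pi)
    (hθtd : ∀ θ ∈ Set.Ioo lo hi, DifferentiableAt ℝ θt θ) :
    (∀ θ ∈ Set.Ioo lo hi,
        deriv (fun u => (a * r₁ u + b) / (c * r₁ u + d)) θ * Real.sin (θt θ) =
          ((a * r₂ θ + b) / (c * r₂ θ + d) - (a * r₁ θ + b) / (c * r₁ θ + d)) *
            Real.cos (θt θ) * deriv θt θ) ↔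
      ∃ A : ℝ, A ≠ 0 ∧ ∀ θ ∈ Set.Ioo lo hi,
        Real.sin (θt θ) = A * Real.sin θ * (c * r₁ θ + d) := by
  have hsin : ∀ θ ∈ Ioo lo hi, sin θ ≠ 0 := fun θ hθ =>
    (sin_pos_of_pos_of_lt_pi (hI hθ).1 (hI hθ).2).ne'
  have hsinθt : ∀ θ ∈ Ioo lo hi, sin (θt θ) ≠ 0 := fun θ hθ =>
    (sin_pos_of_pos_of_lt_pi (hθtmem θ hθ).1 (hθtmem θ hθ).2).ne'
  have hS : ∀ θ ∈ Ioo lo hi, HasDerivAt (fun u => sin (θt u)) (cos (θt θ) * deriv θt θ) θ :=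
    fun θ hθ => (hθtd θ hθ).hasDerivAt.sin
  simp only [mul_assoc _ (cos _), mul_assoc _ (sin _)]
  rw [forall₂_congr fun θ hθ => moebius_codazziMainardi_iff _ _ (hr₁ θ hθ) (hne θ hθ) habcd
    (h1 θ hθ) (h2 θ hθ) (hsin θ hθ)]
  exact exists_ne_zero_eq_const_mul_iff_wronskian_eq_zero isOpen_Ioo isPreconnected_Ioo hS
    (fun θ hθ => hasDerivAt_sin_mul_of_codazziMainardi (hr₁ θ hθ) (hsin θ hθ)) hsinθt
    (fun θ hθ => mul_ne_zero (hsin θ hθ) (h1 θ hθ))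

/-- Reparameterisation lemma for the SL₂(ℝ) action: the Möbius-transformed radii of
curvature satisfy the Codazzi–Mainardi equation in the new Gauss angle `θ̃` if and only
if `sin θ̃(θ) = A sin θ (c r₁(θ) + d)` for some constant `A ≠ 0`. -/
theorem stmt_12 (lo hi : ℝ) (hI : Set.Ioo lo hi ⊆ Set.Ioo 0 Real.pi)
    (r₁ r₂ : ℝ → ℝ) (hr₂ : ContinuousOn r₂ (Set.Ioo lo hi))
    (hr₁ : ∀ θ ∈ Set.Ioo lo hi, HasDerivAt r₁ ((r₂ θ - r₁ θ) * Real.cot θ) θ)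
    (hne : ∀ θ ∈ Set.Ioo lo hi, r₂ θ ≠ r₁ θ)
    (a b c d : ℝ) (habcd : a * d - b * c = 1)
    (h1 : ∀ θ ∈ Set.Ioo lo hi, c * r₁ θ + d ≠ 0)
    (h2 : ∀ θ ∈ Set.Ioo lo hi, c * r₂ θ + d ≠ 0)
    (θt : ℝ → ℝ) (hθtmem : ∀ θ ∈ Set.Ioo lo hi, θt θ ∈ Set.Ioo 0 Real.pi)
    (hθtd : ∀ θ ∈ Set.Ioo lo hi, DifferentiableAt ℝ θt θ) :
    (∀ θ ∈ Set.Ioo lo hi,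
        deriv (fun u => (a * r₁ u + b) / (c * r₁ u + d)) θ * Real.sin (θt θ) =
          ((a * r₂ θ + b) / (c * r₂ θ + d) - (a * r₁ θ + b) / (c * r₁ θ + d)) *
            Real.cos (θt θ) * deriv θt θ) ↔
      ∃ A : ℝ, A ≠ 0 ∧ ∀ θ ∈ Set.Ioo lo hi,
        Real.sin (θt θ) = A * Real.sin θ * (c * r₁ θ + d) :=
  stmt_12_general lo hi hI r₁ r₂ hr₁ hne a b c d habcd h1 h2 θt hθtmem hθtd
end

section
/- Let α, β, γ, δ ∈ ℝ with α ≠ 0, set Λ₁ = β − γ and Λ₂ = (β + γ)² − 4·α·δ, assume Λ₂ ≥ 0, let ε ∈ {1, −1}, and let k = (−(β + γ) + ε·√Λ₂)/(2α). If Λ₁ − ε·√Λ₂ ≠ 0, then −(α·k + β)/(α·k + γ) = (Λ₁ + ε·√Λ₂)/(Λ₁ − ε·√Λ₂). -/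
/-- Umbilic slope of a semi-quadratic Weingarten surface: at an umbilic with common
curvature `k = (-(β+γ) + ε√Λ₂)/(2α)`, the slope `-(αk+β)/(αk+γ)` equals
`(Λ₁ + ε√Λ₂)/(Λ₁ - ε√Λ₂)`. -/
theorem stmt_14 (α β γ δ ε : ℝ) (hα : α ≠ 0) (hε : ε = 1 ∨ ε = -1)
    (hΛ₂ : 0 ≤ (β + γ) ^ 2 - 4 * α * δ)
    (k : ℝ) (hk : k = (-(β + γ) + ε * Real.sqrt ((β + γ) ^ 2 - 4 * α * δ)) / (2 * α))
    (hden : (β - γ) - ε * Real.sqrt ((β + γ) ^ 2 - 4 * α * δ) ≠ 0) :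
    -(α * k + β) / (α * k + γ) =
      ((β - γ) + ε * Real.sqrt ((β + γ) ^ 2 - 4 * α * δ)) /
        ((β - γ) - ε * Real.sqrt ((β + γ) ^ 2 - 4 * α * δ)) := by
  set s := Real.sqrt ((β + γ) ^ 2 - 4 * α * δ) with hs
  have h1 : α * k + β = ((β - γ) + ε * s) / 2 := by
    subst hk; field_simp; ring
  have h2 : α * k + γ = -(((β - γ) - ε * s) / 2) := by
    subst hk; field_simp; ring
  rw [h1, h2, div_neg, neg_div, neg_neg]
  field_simp
end

section
/- Let α, β, γ, δ, α', β', γ', δ' ∈ ℝ satisfy β − γ = β' − γ' and (β + γ)² − 4·α·δ = (β' + γ')² − 4·α'·δ' = 1. Then there exist a, b, c, d ∈ ℝ with a·d − b·c = 1 such that α' = α·d² + δ·b² + (β+γ)·b·d, β' = α·c·d + δ·a·b + (β+γ)·b·c + β, γ' = α·c·d + δ·a·b + (β+γ)·b·c + γ, and δ' = α·c² + δ·a² + (β+γ)·a·c. -/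
/-!
The relation `α k₁k₂ + β k₁ + γ k₂ + δ = 0` is governed by its symmetric part, the binary
quadratic form `α x² + (β + γ) x y + δ y²` of discriminant `Λ₂`: the substitution
`kᵢ ↦ (c + d kᵢ)/(a + b kᵢ)` replaces this form by its composite with the unimodular
substitution `(x, y) ↦ (d x + c y, b x + a y)` and fixes `β - γ`. A form of discriminant `1`
factors into two linear forms whose coefficient matrix has determinant `1`, i.e. it is the
image of `x y`. So all forms of discriminant `1` lie in one orbit, and `β', γ'` are recovered
from `β' + γ'` and `β' - γ' = β - γ`.
-/

namespace BinaryQuadForm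

variable {R : Type*} [CommRing R]

def eval (α s δ x y : R) : R := α * x ^ 2 + s * x * y + δ * y ^ 2

def SubstEquiv (α s δ α' s' δ' : R) : Prop :=
  ∃ a b c d : R, a * d - b * c = 1 ∧
    ∀ x y, eval α' s' δ' x y = eval α s δ (d * x + c * y) (b * x + a * y)

namespace SubstEquiv

variable {α s δ α' s' δ' α'' s'' δ'' : R}

theorem symm (h : SubstEquiv α s δ α' s' δ') : SubstEquiv α' s' δ' α s δ := by
  obtain ⟨a, b, c, d, hdet, hF⟩ := h
  refine ⟨d, -b, -c, a, by linear_combination hdet, fun x y => ?_⟩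
  rw [hF, show d * (a * x + -c * y) + c * (-b * x + d * y) = x by linear_combination x * hdet,
    show b * (a * x + -c * y) + a * (-b * x + d * y) = y by linear_combination y * hdet]

theorem trans (h : SubstEquiv α s δ α' s' δ') (h' : SubstEquiv α' s' δ' α'' s'' δ'') :
    SubstEquiv α s δ α'' s'' δ'' := by
  obtain ⟨a, b, c, d, hdet, hF⟩ := h
  obtain ⟨a', b', c', d', hdet', hF'⟩ := h'
  refine ⟨b * c' + a * a', b * d' + a * b', d * c' + c * a', d * d' + c * b',
    by linear_combination (a' * d' - b' * c') * hdet + hdet', fun x y => ?_⟩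
  rw [hF', hF]
  ring_nf

theorem coeff_eq (h : SubstEquiv α s δ α' s' δ') :
    ∃ a b c d : R, a * d - b * c = 1 ∧
      α' = α * d ^ 2 + δ * b ^ 2 + s * b * d ∧
      s' = 2 * (α * c * d + δ * a * b + s * b * c) + s ∧
      δ' = α * c ^ 2 + δ * a ^ 2 + s * a * c := by
  obtain ⟨a, b, c, d, hdet, hF⟩ := h
  have h10 := hF 1 0
  have h01 := hF 0 1
  have h11 := hF 1 1
  simp only [eval] at h10 h01 h11
  refine ⟨a, b, c, d, hdet, ?_, ?_, ?_⟩
  · linear_combination h10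
  · linear_combination h11 - h10 - h01 + s * hdet
  · linear_combination h01

end SubstEquiv

/-- Factor `α x² + s x y + δ y²` as `(d x + c y)(b x + a y)`, dividing by whichever of
`s + 1`, `s - 1` is nonzero. -/
theorem substEquiv_xy_of_discrim_eq_one {K : Type*} [Field K] (h2 : (2 : K) ≠ 0)
    {α s δ : K} (h : discrim α s δ = 1) : SubstEquiv 0 1 0 α s δ := by
  rw [discrim] at h
  suffices ∃ a b c d : K, a * d - b * c = 1 ∧ b * d = α ∧ a * d + b * c = s ∧ a * c = δ by
    obtain ⟨a, b, c, d, hdet, hα, hs, hδ⟩ := this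
    exact ⟨a, b, c, d, hdet, fun x y => by simp only [eval, ← hα, ← hs, ← hδ]; ring⟩
  by_cases hs : s + 1 = 0
  · have hs' : s - 1 ≠ 0 := by
      intro hs'
      exact h2 (by linear_combination hs - hs')
    refine ⟨2 * δ / (s - 1), 1, (s - 1) / 2, α, ?_, by ring, ?_, ?_⟩ <;> field_simp
    · linear_combination -h
    · linear_combination -h
  · refine ⟨1, 2 * α / (s + 1), δ, (s + 1) / 2, ?_, ?_, ?_, by ring⟩ <;> field_simp
    · linear_combination h
    · linear_combination -h

end BinaryQuadForm

open BinaryQuadForm in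
/-- Transitivity of the SL₂(ℝ) action on normalised semi-quadratic Weingarten
relations sharing the same `Λ₁ = β - γ` (with `Λ₂ = (β+γ)² - 4αδ = 1`). -/
theorem stmt_16 (α β γ δ α' β' γ' δ' : ℝ)
    (hΛ₁ : β - γ = β' - γ')
    (hΛ₂ : (β + γ) ^ 2 - 4 * α * δ = 1)
    (hΛ₂' : (β' + γ') ^ 2 - 4 * α' * δ' = 1) :
    ∃ a b c d : ℝ, a * d - b * c = 1 ∧
      α' = α * d ^ 2 + δ * b ^ 2 + (β + γ) * b * d ∧
      β' = α * c * d + δ * a * b + (β + γ) * b * c + β ∧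
      γ' = α * c * d + δ * a * b + (β + γ) * b * c + γ ∧
      δ' = α * c ^ 2 + δ * a ^ 2 + (β + γ) * a * c := by
  have h2 : (2 : ℝ) ≠ 0 := two_ne_zero
  obtain ⟨a, b, c, d, hdet, hα', hs', hδ'⟩ :=
    ((substEquiv_xy_of_discrim_eq_one h2 hΛ₂).symm.trans
      (substEquiv_xy_of_discrim_eq_one h2 hΛ₂')).coeff_eq
  exact ⟨a, b, c, d, hdet, hα', by linarith, by linarith, hδ'⟩
end

section
/- Let J ⊆ ℝ be an open interval and F : J → ℝ a function with u − F(u) > 0 for all u ∈ J. Let g : J → ℝ be differentiable with g'(u) = 1/(u − F(u)), define Φ₀(u) = exp(g(u))/(u − F(u)) and P(u) = exp(g(u)), and let Q : J → ℝ be differentiable with Q'(u) = P(u). Define the Lagrangian L(θ, x, y) = tan²(θ)·Q(y·cot(θ) + x). Then for every twice differentiable function r : (θ₁, θ₂) → ℝ with (θ₁, θ₂) ⊆ (0, π/2) and r'(θ)·cot(θ) + r(θ) ∈ J for all θ, the Euler–Lagrange expression satisfies, for all θ ∈ (θ₁, θ₂): d/dθ[ (∂L/∂y)(θ, r(θ),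 r'(θ)) ] − (∂L/∂x)(θ, r(θ), r'(θ)) = Φ₀(r₁(θ))·( r''(θ) + r(θ) − F(r₁(θ)) ), where r₁(θ) = r'(θ)·cot(θ) + r(θ). -/
/-! `L` depends on `(x, y)` only through `r₁ = y cot θ + x`, so along the curve
`∂L/∂x = tan²θ · P(r₁)` and `∂L/∂y = tan θ · P(r₁)`. As `P' = P / (u - F u)`, differentiating
`∂L/∂y` in `θ` and subtracting `∂L/∂x` gives `P(r₁) + tan θ · P(r₁) / (r₁ - F r₁) · r₁'`, and
`tan θ · r₁' = r'' - r' cot θ = r'' + r - r₁`, which leaves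
`P(r₁) / (r₁ - F r₁) · (r'' + r - F r₁)`. -/

open Real

theorem Real.hasDerivAt_cot {x : ℝ} (hx : sin x ≠ 0) :
    HasDerivAt cot (-(1 / sin x ^ 2)) x := by
  have h : HasDerivAt (fun x => cos x / sin x) _ x := (hasDerivAt_cos x).div (hasDerivAt_sin x) hx
  rw [← funext cot_eq_cos_div_sin] at h
  convert h using 1
  field_simp
  linear_combination sin_sq_add_cos_sq x

theorem hasDerivAt_of_eq_exp_comp {g P : ℝ → ℝ} {u D : ℝ} (hP : ∀ v, P v = exp (g v))
    (hg : HasDerivAt g (1 / D) u) : HasDerivAt P (P u / D) u := by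
  rw [funext hP]
  simpa [div_eq_mul_inv, mul_comm] using hg.exp

theorem deriv_const_mul_comp_mul_const_add_const {Q : ℝ → ℝ} {q a b c y : ℝ}
    (hQ : HasDerivAt Q q (y * b + c)) :
    deriv (fun y => a * Q (y * b + c)) y = a * b * q := by
  have hlin : HasDerivAt (fun y : ℝ => y * b + c) b y := by
    simpa using ((hasDerivAt_id y).mul_const b).add_const c
  have h : HasDerivAt (fun y => a * Q (y * b + c)) (a * (q * b)) y :=
    (hQ.comp y hlin).const_mul a
  rw [h.deriv]
  ring

theorem deriv_const_mul_comp_const_add {Q : ℝ → ℝ} {q a c x : ℝ} (hQ : HasDerivAt Q q (c + x)) :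
    deriv (fun x => a * Q (c + x)) x = a * q := by
  have h : HasDerivAt (fun x => a * Q (c + x)) (a * q) x := by
    simpa using (hQ.comp x ((hasDerivAt_id x).const_add c)).const_mul a
  exact h.deriv

theorem tan_sq_mul_cot (θ : ℝ) : tan θ ^ 2 * cot θ = tan θ := by
  rw [tan_eq_sin_div_cos, cot_eq_cos_div_sin]
  rcases eq_or_ne (sin θ) 0 with hs | hs
  · simp [hs]
  rcases eq_or_ne (cos θ) 0 with hc | hc
  · simp [hc]
  field_simp

theorem tan_euler_lagrange_identity {θ : ℝ} (E D a b : ℝ) (hs : sin θ ≠ 0) (hc : cos θ ≠ 0)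
    (hD : D ≠ 0) :
    1 / cos θ ^ 2 * E + tan θ * (E / D * (b * cot θ + a * -(1 / sin θ ^ 2) + a)) -
        tan θ ^ 2 * E = E / D * (b - a * cot θ + D) := by
  rw [tan_eq_sin_div_cos, cot_eq_cos_div_sin]
  field_simp
  linear_combination (E * cos θ * a - E * sin θ * D) * sin_sq_add_cos_sq θ

theorem stmt_17_general (J : Set ℝ)
    (F g : ℝ → ℝ) (hF : ∀ u ∈ J, 0 < u - F u)
    (hg : ∀ u ∈ J, HasDerivAt g (1 / (u - F u)) u)
    (P Q : ℝ → ℝ) (hP : ∀ u, P u = Real.exp (g u))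
    (hQ : ∀ u ∈ J, HasDerivAt Q (P u) u)
    (Φ₀ : ℝ → ℝ) (hΦ₀ : ∀ u, Φ₀ u = Real.exp (g u) / (u - F u))
    (L : ℝ → ℝ → ℝ → ℝ)
    (hL : ∀ θ x y, L θ x y = Real.tan θ ^ 2 * Q (y * Real.cot θ + x))
    (θ₁ θ₂ : ℝ) (hsub : Set.Ioo θ₁ θ₂ ⊆ Set.Ioo 0 (Real.pi / 2))
    (r r' r'' : ℝ → ℝ)
    (hr : ∀ θ ∈ Set.Ioo θ₁ θ₂, HasDerivAt r (r' θ) θ)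
    (hr' : ∀ θ ∈ Set.Ioo θ₁ θ₂, HasDerivAt r' (r'' θ) θ)
    (hmem : ∀ θ ∈ Set.Ioo θ₁ θ₂, r' θ * Real.cot θ + r θ ∈ J) :
    ∀ θ ∈ Set.Ioo θ₁ θ₂,
      deriv (fun t => deriv (fun y => L t (r t) y) (r' t)) θ -
          deriv (fun x => L θ x (r' θ)) (r θ) =
        Φ₀ (r' θ * Real.cot θ + r θ) *
          (r'' θ + r θ - F (r' θ * Real.cot θ + r θ)) := by
  have hsin : ∀ t ∈ Set.Ioo θ₁ θ₂, sin t ≠ 0 := fun t ht =>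
    (sin_pos_of_pos_of_lt_pi (hsub ht).1 (by linarith [(hsub ht).2, pi_pos])).ne'
  have hcos : ∀ t ∈ Set.Ioo θ₁ θ₂, cos t ≠ 0 := fun t ht =>
    (cos_pos_of_mem_Ioo ⟨by linarith [(hsub ht).1, pi_pos], (hsub ht).2⟩).ne'
  intro θ hθ
  simp only [hL]
  have hpartial_y : (fun t => deriv (fun y => tan t ^ 2 * Q (y * cot t + r t)) (r' t))
      =ᶠ[nhds θ] fun t => tan t * P (r' t * cot t + r t) := by
    filter_upwards [isOpen_Ioo.mem_nhds hθ] with t ht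
    rw [deriv_const_mul_comp_mul_const_add_const (hQ _ (hmem t ht)), tan_sq_mul_cot t]
  have hr₁ : HasDerivAt (fun t => r' t * cot t + r t)
      (r'' θ * cot θ + r' θ * -(1 / sin θ ^ 2) + r' θ) θ :=
    ((hr' θ hθ).mul (hasDerivAt_cot (hsin θ hθ))).add (hr θ hθ)
  have hpartial_y_hasDeriv : HasDerivAt (fun t => tan t * P (r' t * cot t + r t)) _ θ :=
    (hasDerivAt_tan (hcos θ hθ)).mul ((hasDerivAt_of_eq_exp_comp hP (hg _ (hmem θ hθ))).comp θ hr₁)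
  rw [hpartial_y.deriv_eq, hpartial_y_hasDeriv.deriv,
    deriv_const_mul_comp_const_add (hQ _ (hmem θ hθ)), hΦ₀, ← hP, tan_euler_lagrange_identity _ _ _ _ (hsin θ hθ) (hcos θ hθ) (hF _ (hmem θ hθ)).ne']
  ring

/-- The translation-invariant Lagrangian `L(θ,x,y) = tan²θ · Q(y cot θ + x)`, where
`Q' = P = exp ∘ g` and `g' (u) = 1/(u - F u)`, has Euler–Lagrange expression equal to
`Φ₀(r₁) (r'' + r - F(r₁))` with `r₁ = r' cot θ + r` and
`Φ₀(u) = exp(g u)/(u - F u)`. -/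
theorem stmt_17 (J : Set ℝ) (hJopen : IsOpen J) (hJconn : J.OrdConnected)
    (F g : ℝ → ℝ) (hF : ∀ u ∈ J, 0 < u - F u)
    (hg : ∀ u ∈ J, HasDerivAt g (1 / (u - F u)) u)
    (P Q : ℝ → ℝ) (hP : ∀ u, P u = Real.exp (g u))
    (hQ : ∀ u ∈ J, HasDerivAt Q (P u) u)
    (Φ₀ : ℝ → ℝ) (hΦ₀ : ∀ u, Φ₀ u = Real.exp (g u) / (u - F u))
    (L : ℝ → ℝ → ℝ → ℝ)
    (hL : ∀ θ x y, L θ x y = Real.tan θ ^ 2 * Q (y * Real.cot θ + x))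
    (θ₁ θ₂ : ℝ) (hsub : Set.Ioo θ₁ θ₂ ⊆ Set.Ioo 0 (Real.pi / 2))
    (r r' r'' : ℝ → ℝ)
    (hr : ∀ θ ∈ Set.Ioo θ₁ θ₂, HasDerivAt r (r' θ) θ)
    (hr' : ∀ θ ∈ Set.Ioo θ₁ θ₂, HasDerivAt r' (r'' θ) θ)
    (hmem : ∀ θ ∈ Set.Ioo θ₁ θ₂, r' θ * Real.cot θ + r θ ∈ J) :
    ∀ θ ∈ Set.Ioo θ₁ θ₂,
      deriv (fun t => deriv (fun y => L t (r t) y) (r' t)) θ -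
          deriv (fun x => L θ x (r' θ)) (r θ) =
        Φ₀ (r' θ * Real.cot θ + r θ) *
          (r'' θ + r θ - F (r' θ * Real.cot θ + r θ)) :=
  stmt_17_general J F g hF hg P Q hP hQ Φ₀ hΦ₀ L hL θ₁ θ₂ hsub r r' r'' hr hr' hmem
end

section
/- Let J ⊆ ℝ be an open interval and F : J → ℝ with u − F(u) > 0 for all u ∈ J; let g : J → ℝ be differentiable with g'(u) = 1/(u − F(u)), define Φ₀(u) = exp(g(u))/(u − F(u)) > 0 and P(u) = exp(g(u)), and let Q : J → ℝ be differentiable with Q' = P; set L(θ, x, y) = tan²(θ)·Q(y·cot(θ) + x). Let [θ₁, θ₂] ⊂ (0, π/2), let r⋆ : [θ₁, θ₂] → ℝ be twice continuously differentiable with r₁⋆(θ) := r⋆'(θ)·cot(θ) + r⋆(θ) ∈ J for all θ and solving r⋆'' + r⋆ = F(r₁⋆), and let v : [θ₁, θ₂] → ℝ be continuously differentiable with v(θ₁) = v(θ₂) = 0 and v not identically zero. Then the second variation of the functional S[r] = ∫_{θ₁}^{θ₂} L(θ, r(θ), r'(θ)) dθ at r⋆ in the direction v, namely the second derivative at ε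 = 0 of ε ↦ S[r⋆ + ε·v], equals ∫_{θ₁}^{θ₂} Φ₀(r₁⋆(θ))·( tan(θ)·v(θ) + v'(θ) )² dθ, and this quantity is strictly positive. -/
open MeasureTheory Set Filter Metric intervalIntegral
open scoped Topology Interval

private lemma param_deriv {a b : ℝ} (hab : a < b) {δ M : ℝ} (hδ : 0 < δ)
    {B m c H H' : ℝ → ℝ}
    (hB : ContinuousOn B (Set.Icc a b)) (hc : ContinuousOn c (Set.Icc a b))
    (hdiff : ∀ θ ∈ Set.Icc a b, ∀ s : ℝ, |s| < δ →
      HasDerivAt H (H' (m θ + s * c θ)) (m θ + s * c θ))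
    (hbd : ∀ θ ∈ Set.Icc a b, ∀ s : ℝ, |s| < δ → |H' (m θ + s * c θ)| ≤ M)
    (hHcont : ∀ s : ℝ, |s| < δ → ContinuousOn (fun θ => H (m θ + s * c θ)) (Set.Icc a b))
    {s₀ : ℝ} (hs₀ : |s₀| < δ)
    (hH'cont : ContinuousOn (fun θ => H' (m θ + s₀ * c θ)) (Set.Icc a b)) :
    HasDerivAt (fun s => ∫ θ in a..b, B θ * H (m θ + s * c θ))
      (∫ θ in a..b, B θ * (H' (m θ + s₀ * c θ) * c θ)) s₀ := by
  have hIoc : Ι a b = Set.Ioc a b := uIoc_of_le hab.le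
  have huIcc : Set.uIcc a b = Set.Icc a b := uIcc_of_le hab.le
  have hsubI : Ι a b ⊆ Set.Icc a b := by rw [hIoc]; exact Ioc_subset_Icc_self
  have hmeasI : MeasurableSet (Ι a b) := by rw [hIoc]; exact measurableSet_Ioc
  have εpos : 0 < δ - |s₀| := sub_pos.2 hs₀
  have hball : ∀ x ∈ ball s₀ (δ - |s₀|), |x| < δ := by
    intro x hx
    have h1 : |x - s₀| < δ - |s₀| := by simpa [Real.dist_eq] using hx
    have h2 : |x| ≤ |x - s₀| + |s₀| := by
      simpa using abs_add_le (x - s₀) s₀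
    linarith
  have hmeas : ∀ s : ℝ, |s| < δ →
      AEStronglyMeasurable (fun θ => B θ * H (m θ + s * c θ)) (volume.restrict (Ι a b)) :=
    fun s hs => ((hB.mul (hHcont s hs)).mono hsubI).aestronglyMeasurable hmeasI
  have key := intervalIntegral.hasDerivAt_integral_of_dominated_loc_of_deriv_le
    (μ := volume) (F := fun s θ => B θ * H (m θ + s * c θ))
    (F' := fun s θ => B θ * (H' (m θ + s * c θ) * c θ)) (x₀ := s₀)
    (bound := fun θ => |B θ| * (M * |c θ|)) (a := a) (b := b) (ball_mem_nhds s₀ εpos)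
    ?_ ?_ ?_ ?_ ?_ ?_
  · exact key.2
  · filter_upwards [ball_mem_nhds s₀ εpos] with x hx using hmeas x (hball x hx)
  · apply ContinuousOn.intervalIntegrable
    rw [huIcc]; exact hB.mul (hHcont s₀ hs₀)
  · exact ((hB.mul (hH'cont.mul hc)).mono hsubI).aestronglyMeasurable hmeasI
  · refine ae_of_all _ fun θ hθ x hx => ?_
    have hθ' : θ ∈ Set.Icc a b := hsubI hθ
    have h1 : |H' (m θ + x * c θ)| ≤ M := hbd θ hθ' x (hball x hx)
    have : |B θ * (H' (m θ + x * c θ) * c θ)| ≤ |B θ| * (M * |c θ|) := by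
      rw [abs_mul, abs_mul]
      exact mul_le_mul_of_nonneg_left
        (mul_le_mul_of_nonneg_right h1 (abs_nonneg _)) (abs_nonneg _)
    simpa [Real.norm_eq_abs, abs_mul] using this
  · apply ContinuousOn.intervalIntegrable
    rw [huIcc]; exact hB.abs.mul (continuousOn_const.mul hc.abs)
  · refine ae_of_all _ fun θ hθ x hx => ?_
    have hθ' : θ ∈ Set.Icc a b := hsubI hθ
    have h1 : HasDerivAt (fun s : ℝ => m θ + s * c θ) (c θ) x :=
      (hasDerivAt_mul_const (c θ)).const_add (m θ)
    exact ((hdiff θ hθ' x (hball x hx)).comp x h1).const_mul (B θ)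

set_option maxHeartbeats 2000000 in
/-- Stability of the variational formulation: the second variation of
`S[r] = ∫ tan²θ · Q(r' cot θ + r) dθ` at a solution `r⋆` of `r'' + r = F(r' cot θ + r)`
in a direction `v` vanishing at the endpoints equals
`∫ Φ₀(r₁⋆)(tan θ · v + v')² dθ`, and it is strictly positive when `v ≢ 0`. -/
theorem stmt_19 (J : Set ℝ) (hJopen : IsOpen J) (hJconn : J.OrdConnected)
    (F g : ℝ → ℝ) (hF : ∀ u ∈ J, 0 < u - F u)
    (hg : ∀ u ∈ J, HasDerivAt g (1 / (u - F u)) u)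
    (P Q Φ₀ : ℝ → ℝ) (hP : ∀ u, P u = Real.exp (g u))
    (hQ : ∀ u ∈ J, HasDerivAt Q (P u) u)
    (hΦ₀ : ∀ u, Φ₀ u = Real.exp (g u) / (u - F u))
    (θ₁ θ₂ : ℝ) (hθ₁₂ : θ₁ < θ₂) (hsub : Set.Icc θ₁ θ₂ ⊆ Set.Ioo 0 (Real.pi / 2))
    (rs rs' rs'' : ℝ → ℝ)
    (hrs : ∀ θ ∈ Set.Icc θ₁ θ₂, HasDerivWithinAt rs (rs' θ) (Set.Icc θ₁ θ₂) θ)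
    (hrs' : ∀ θ ∈ Set.Icc θ₁ θ₂, HasDerivWithinAt rs' (rs'' θ) (Set.Icc θ₁ θ₂) θ)
    (hrs'' : ContinuousOn rs'' (Set.Icc θ₁ θ₂))
    (hmem : ∀ θ ∈ Set.Icc θ₁ θ₂, rs' θ * Real.cot θ + rs θ ∈ J)
    (hode : ∀ θ ∈ Set.Icc θ₁ θ₂, rs'' θ + rs θ = F (rs' θ * Real.cot θ + rs θ))
    (v v' : ℝ → ℝ)
    (hv : ∀ θ ∈ Set.Icc θ₁ θ₂, HasDerivWithinAt v (v' θ) (Set.Icc θ₁ θ₂) θ)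
    (hv' : ContinuousOn v' (Set.Icc θ₁ θ₂))
    (hv1 : v θ₁ = 0) (hv2 : v θ₂ = 0)
    (hvne : ∃ θ ∈ Set.Icc θ₁ θ₂, v θ ≠ 0) :
    deriv (deriv (fun ε => ∫ θ in θ₁..θ₂,
        Real.tan θ ^ 2 *
          Q ((rs' θ + ε * v' θ) * Real.cot θ + (rs θ + ε * v θ)))) 0 =
      (∫ θ in θ₁..θ₂,
        Φ₀ (rs' θ * Real.cot θ + rs θ) * (Real.tan θ * v θ + v' θ) ^ 2) ∧
    0 < ∫ θ in θ₁..θ₂,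
        Φ₀ (rs' θ * Real.cot θ + rs θ) * (Real.tan θ * v θ + v' θ) ^ 2 := by
  classical
  have hab : θ₁ ≤ θ₂ := hθ₁₂.le
  have hm1 : θ₁ ∈ Set.Icc θ₁ θ₂ := left_mem_Icc.2 hab
  have hm2 : θ₂ ∈ Set.Icc θ₁ θ₂ := right_mem_Icc.2 hab
  have huIcc : Set.uIcc θ₁ θ₂ = Set.Icc θ₁ θ₂ := uIcc_of_le hab
  -- trigonometric facts
  have hsin : ∀ θ ∈ Set.Icc θ₁ θ₂, 0 < Real.sin θ := by
    intro θ hθ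
    refine Real.sin_pos_of_pos_of_lt_pi (hsub hθ).1 ?_
    have := (hsub hθ).2
    have hπ := Real.pi_pos
    linarith
  have hcos : ∀ θ ∈ Set.Icc θ₁ θ₂, 0 < Real.cos θ := by
    intro θ hθ
    refine Real.cos_pos_of_mem_Ioo ⟨?_, (hsub hθ).2⟩
    have := (hsub hθ).1
    have hπ := Real.pi_pos
    linarith
  have hcot_eq : Real.cot = fun x => Real.cos x / Real.sin x :=
    funext fun x => Real.cot_eq_cos_div_sin x
  have cont_cot : ContinuousOn Real.cot (Set.Icc θ₁ θ₂) := by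
    rw [hcot_eq]
    exact (Real.continuous_cos.continuousOn.div
      Real.continuous_sin.continuousOn fun θ hθ => (hsin θ hθ).ne')
  have cont_tan : ContinuousOn Real.tan (Set.Icc θ₁ θ₂) := by
    have : Real.tan = fun x => Real.sin x / Real.cos x :=
      funext fun x => Real.tan_eq_sin_div_cos x
    rw [this]
    exact (Real.continuous_sin.continuousOn.div
      Real.continuous_cos.continuousOn fun θ hθ => (hcos θ hθ).ne')
  have hcotpos : ∀ θ ∈ Set.Icc θ₁ θ₂, 0 < Real.cot θ := by
    intro θ hθ
    rw [Real.cot_eq_cos_div_sin]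
    exact div_pos (hcos θ hθ) (hsin θ hθ)
  have htc : ∀ θ ∈ Set.Icc θ₁ θ₂, Real.tan θ * Real.cot θ = 1 := by
    intro θ hθ
    have h1 := (hsin θ hθ).ne'
    have h2 := (hcos θ hθ).ne'
    rw [Real.cot_eq_cos_div_sin, Real.tan_eq_sin_div_cos]
    field_simp
  -- continuity of basic data
  have cont_rs : ContinuousOn rs (Set.Icc θ₁ θ₂) := fun θ hθ => (hrs θ hθ).continuousWithinAt
  have cont_rs' : ContinuousOn rs' (Set.Icc θ₁ θ₂) := fun θ hθ => (hrs' θ hθ).continuousWithinAt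
  have cont_v : ContinuousOn v (Set.Icc θ₁ θ₂) := fun θ hθ => (hv θ hθ).continuousWithinAt
  set r₁ : ℝ → ℝ := fun θ => rs' θ * Real.cot θ + rs θ with hr₁def
  set w : ℝ → ℝ := fun θ => v' θ * Real.cot θ + v θ with hwdef
  have cont_r₁ : ContinuousOn r₁ (Set.Icc θ₁ θ₂) := (cont_rs'.mul cont_cot).add cont_rs
  have cont_w : ContinuousOn w (Set.Icc θ₁ θ₂) := (hv'.mul cont_cot).add cont_v
  have hr₁J : ∀ θ ∈ Set.Icc θ₁ θ₂, r₁ θ ∈ J := hmem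
  -- continuity of P, Q, g on J
  have hgc : ContinuousOn g J := fun u hu => (hg u hu).continuousAt.continuousWithinAt
  have hPfun : P = fun u => Real.exp (g u) := funext hP
  have hPc : ContinuousOn P J := by rw [hPfun]; exact Real.continuous_exp.comp_continuousOn hgc
  have hQc : ContinuousOn Q J := fun u hu => (hQ u hu).continuousAt.continuousWithinAt
  have hPJ : ∀ u ∈ J, HasDerivAt P (Φ₀ u) u := by
    intro u hu
    have h := (hg u hu).exp
    rw [hPfun, hΦ₀ u]
    simpa [div_eq_mul_inv, one_div] using h
  -- the denominator identity from the ODE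
  set den : ℝ → ℝ := fun θ => rs' θ * Real.cot θ - rs'' θ with hdendef
  have hden : ∀ θ ∈ Set.Icc θ₁ θ₂, r₁ θ - F (r₁ θ) = den θ := by
    intro θ hθ
    have h := hode θ hθ
    simp only [hr₁def, hdendef]
    linarith
  have hdenpos : ∀ θ ∈ Set.Icc θ₁ θ₂, 0 < den θ := by
    intro θ hθ
    rw [← hden θ hθ]
    exact hF _ (hr₁J θ hθ)
  have cont_den : ContinuousOn den (Set.Icc θ₁ θ₂) := (cont_rs'.mul cont_cot).sub hrs''
  have contPhi : ContinuousOn (fun θ => Φ₀ (r₁ θ)) (Set.Icc θ₁ θ₂) := by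
    refine ContinuousOn.congr
      (((hPc.comp cont_r₁ hr₁J)).div cont_den fun θ hθ => (hdenpos θ hθ).ne') ?_
    intro θ hθ
    simp only [Pi.div_apply, Function.comp_apply]
    rw [hΦ₀, hden θ hθ, hP]
  have hphp : ∀ θ ∈ Set.Icc θ₁ θ₂, 0 < Φ₀ (r₁ θ) := by
    intro θ hθ
    rw [hΦ₀]
    exact div_pos (Real.exp_pos _) (hF _ (hr₁J θ hθ))
  -- derivative of r₁, strict antitonicity
  have hcotd : ∀ θ ∈ Set.Icc θ₁ θ₂, HasDerivAt Real.cot (-(1 / Real.sin θ ^ 2)) θ := by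
    intro θ hθ
    have hs := (hsin θ hθ).ne'
    have h := (Real.hasDerivAt_cos θ).div (Real.hasDerivAt_sin θ) hs
    have hnum : -Real.sin θ * Real.sin θ - Real.cos θ * Real.cos θ = -1 := by
      have := Real.sin_sq_add_cos_sq θ; nlinarith
    rw [hcot_eq]
    rw [hnum] at h
    have h' : HasDerivAt (Real.cos / Real.sin) (-(1 / Real.sin θ ^ 2)) θ := by
      simpa [neg_div] using h
    exact h'
  have hr₁d : ∀ θ ∈ Set.Icc θ₁ θ₂,
      HasDerivWithinAt r₁ (-(Real.cot θ * den θ)) (Set.Icc θ₁ θ₂) θ := by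
    intro θ hθ
    have h1 := ((hrs' θ hθ).mul ((hcotd θ hθ).hasDerivWithinAt)).add (hrs θ hθ)
    have hval : rs'' θ * Real.cot θ + rs' θ * -(1 / Real.sin θ ^ 2) + rs' θ
        = -(Real.cot θ * den θ) := by
      have hs := (hsin θ hθ).ne'
      have hsc := Real.sin_sq_add_cos_sq θ
      have hk : Real.cot θ ^ 2 + 1 = 1 / Real.sin θ ^ 2 := by
        rw [Real.cot_eq_cos_div_sin, div_pow]
        field_simp
        linarith
      simp only [hdendef]
      linear_combination rs' θ * hk
    rw [hval] at h1
    exact h1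
  have hanti : StrictAntiOn r₁ (Set.Icc θ₁ θ₂) := by
    apply strictAntiOn_of_deriv_neg (convex_Icc _ _) cont_r₁
    intro θ hθ
    rw [interior_Icc] at hθ
    have hθ' : θ ∈ Set.Icc θ₁ θ₂ := Set.Ioo_subset_Icc_self hθ
    have hd : HasDerivAt r₁ (-(Real.cot θ * den θ)) θ :=
      (hr₁d θ hθ').hasDerivAt (Icc_mem_nhds hθ.1 hθ.2)
    rw [hd.deriv]
    exact neg_neg_of_pos (mul_pos (hcotpos θ hθ') (hdenpos θ hθ'))
  have hABlt : r₁ θ₂ < r₁ θ₁ := hanti hm1 hm2 hθ₁₂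
  have hrange : ∀ θ ∈ Set.Icc θ₁ θ₂, r₁ θ ∈ Set.Icc (r₁ θ₂) (r₁ θ₁) := fun θ hθ =>
    ⟨hanti.antitoneOn hθ hm2 hθ.2, hanti.antitoneOn hm1 hθ hθ.1⟩
  have hIccJ : Set.Icc (r₁ θ₂) (r₁ θ₁) ⊆ J := hJconn.out (hr₁J θ₂ hm2) (hr₁J θ₁ hm1)
  have hsurj : Set.Icc (r₁ θ₂) (r₁ θ₁) ⊆ r₁ '' Set.Icc θ₁ θ₂ :=
    intermediate_value_Icc' hab cont_r₁
  obtain ⟨M, hM⟩ := isCompact_Icc.exists_bound_of_continuousOn contPhi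
  have hMI : ∀ u ∈ Set.Icc (r₁ θ₂) (r₁ θ₁), |Φ₀ u| ≤ M := by
    intro u hu
    obtain ⟨θ, hθ, hθu⟩ := hsurj hu
    rw [← hθu]
    simpa [Real.norm_eq_abs] using hM θ hθ
  obtain ⟨Cw, hCw'⟩ := isCompact_Icc.exists_bound_of_continuousOn cont_w
  have hCw : ∀ θ ∈ Set.Icc θ₁ θ₂, |w θ| ≤ Cw := by
    intro θ hθ; simpa [Real.norm_eq_abs] using hCw' θ hθ
  have hCw0 : 0 ≤ Cw := le_trans (abs_nonneg _) (hCw θ₁ hm1)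
  obtain ⟨Cb, hCb'⟩ := isCompact_Icc.exists_bound_of_continuousOn
    ((cont_tan.pow 2).mul cont_w)
  have hCb : ∀ θ ∈ Set.Icc θ₁ θ₂, |Real.tan θ ^ 2 * w θ| ≤ Cb := by
    intro θ hθ
    rw [abs_mul, abs_of_nonneg (sq_nonneg (Real.tan θ))]
    simpa [Real.norm_eq_abs, abs_mul, abs_of_nonneg (sq_nonneg (Real.tan θ))] using hCb' θ hθ
  have hCb0 : 0 ≤ Cb := le_trans (abs_nonneg _) (hCb θ₁ hm1)
  have hK : IsCompact (r₁ '' Set.Icc θ₁ θ₂) := isCompact_Icc.image_of_continuousOn cont_r₁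
  have hKJ : r₁ '' Set.Icc θ₁ θ₂ ⊆ J := Set.image_subset_iff.2 fun θ hθ => hr₁J θ hθ
  obtain ⟨ρ, hρpos, hρ⟩ := hK.exists_cthickening_subset_open hJopen hKJ
  set δ₀ : ℝ := ρ / (Cw + 1) with hδ₀def
  have hδ₀ : 0 < δ₀ := div_pos hρpos (by linarith)
  have hthick : ∀ θ ∈ Set.Icc θ₁ θ₂, ∀ s : ℝ, |s| < δ₀ →
      r₁ θ + s * w θ ∈ Metric.cthickening ρ (r₁ '' Set.Icc θ₁ θ₂) := by
    intro θ hθ s hs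
    apply Metric.mem_cthickening_of_dist_le (r₁ θ + s * w θ) (r₁ θ) ρ _ (Set.mem_image_of_mem r₁ hθ)
    rw [Real.dist_eq]
    have h1 : |r₁ θ + s * w θ - r₁ θ| = |s| * |w θ| := by
      rw [show r₁ θ + s * w θ - r₁ θ = s * w θ by ring, abs_mul]
    rw [h1]
    have h2 : |s| * |w θ| ≤ δ₀ * Cw :=
      mul_le_mul hs.le (hCw θ hθ) (abs_nonneg _) hδ₀.le
    have h3 : δ₀ * Cw ≤ ρ := by
      rw [hδ₀def, div_mul_eq_mul_div, div_le_iff₀ (by linarith : (0:ℝ) < Cw + 1)]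
      nlinarith
    linarith
  have hinJ : ∀ θ ∈ Set.Icc θ₁ θ₂, ∀ s : ℝ, |s| < δ₀ → r₁ θ + s * w θ ∈ J :=
    fun θ hθ s hs => hρ (hthick θ hθ s hs)
  obtain ⟨MP, hMP'⟩ := (hK.cthickening (r := ρ)).exists_bound_of_continuousOn (hPc.mono hρ)
  have hMP : ∀ θ ∈ Set.Icc θ₁ θ₂, ∀ s : ℝ, |s| < δ₀ → |P (r₁ θ + s * w θ)| ≤ MP := by
    intro θ hθ s hs
    simpa [Real.norm_eq_abs] using hMP' _ (hthick θ hθ s hs)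
  have cont_inner : ∀ s : ℝ, ContinuousOn (fun θ => r₁ θ + s * w θ) (Set.Icc θ₁ θ₂) :=
    fun s => cont_r₁.add (continuousOn_const.mul cont_w)
  have hfeq : (fun ε => ∫ θ in θ₁..θ₂,
        Real.tan θ ^ 2 * Q ((rs' θ + ε * v' θ) * Real.cot θ + (rs θ + ε * v θ)))
      = fun ε => ∫ θ in θ₁..θ₂, Real.tan θ ^ 2 * Q (r₁ θ + ε * w θ) := by
    funext ε
    refine intervalIntegral.integral_congr fun θ _ => ?_
    have : (rs' θ + ε * v' θ) * Real.cot θ + (rs θ + ε * v θ) = r₁ θ + ε * w θ := by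
      simp only [hr₁def, hwdef]; ring
    rw [this]
  set Ψ : ℝ → ℝ := fun s => ∫ θ in θ₁..θ₂,
      Real.tan θ ^ 2 * (P (r₁ θ + s * w θ) * w θ) with hΨdef
  have hf1 : ∀ s₀ : ℝ, |s₀| < δ₀ →
      HasDerivAt (fun ε => ∫ θ in θ₁..θ₂, Real.tan θ ^ 2 * Q (r₁ θ + ε * w θ)) (Ψ s₀) s₀ := by
    intro s₀ hs₀
    rw [hΨdef]
    exact param_deriv hθ₁₂ hδ₀ (cont_tan.pow 2) cont_w
      (fun θ hθ s hs => hQ _ (hinJ θ hθ s hs))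
      (fun θ hθ s hs => hMP θ hθ s hs)
      (fun s hs => hQc.comp (cont_inner s) (fun θ hθ => hinJ θ hθ s hs))
      hs₀
      (hPc.comp (cont_inner s₀) (fun θ hθ => hinJ θ hθ s₀ hs₀))
  have hev : deriv (fun ε => ∫ θ in θ₁..θ₂,
      Real.tan θ ^ 2 * Q (r₁ θ + ε * w θ)) =ᶠ[𝓝 0] Ψ := by
    filter_upwards [ball_mem_nhds (0:ℝ) hδ₀] with s hs
    exact (hf1 s (by simpa [Real.dist_eq] using hs)).deriv
  set Apt : ℝ := r₁ θ₂ with hAdef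
  set Bpt : ℝ := r₁ θ₁ with hBdef
  have hAJ : Apt ∈ J := hr₁J θ₂ hm2
  have hBJ : Bpt ∈ J := hr₁J θ₁ hm1
  set Pt : ℝ → ℝ := fun u => if u < Apt then P Apt + Φ₀ Apt * (u - Apt)
      else if u ≤ Bpt then P u else P Bpt + Φ₀ Bpt * (u - Bpt) with hPtdef
  set Pht : ℝ → ℝ := fun u => if u < Apt then Φ₀ Apt
      else if u ≤ Bpt then Φ₀ u else Φ₀ Bpt with hPhtdef
  have hPtA : ∀ x ∈ Set.Icc Apt Bpt, Pt x = P x := by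
    intro x hx
    simp only [hPtdef]; rw [if_neg (not_lt.2 hx.1), if_pos hx.2]
  have hlinA : ∀ u : ℝ, HasDerivAt (fun x => P Apt + Φ₀ Apt * (x - Apt)) (Φ₀ Apt) u := by
    intro u
    simpa using (((hasDerivAt_id u).sub_const Apt).const_mul (Φ₀ Apt)).const_add (P Apt)
  have hlinB : ∀ u : ℝ, HasDerivAt (fun x => P Bpt + Φ₀ Bpt * (x - Bpt)) (Φ₀ Bpt) u := by
    intro u
    simpa using (((hasDerivAt_id u).sub_const Bpt).const_mul (Φ₀ Bpt)).const_add (P Bpt)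
  have hPt : ∀ u : ℝ, HasDerivAt Pt (Pht u) u := by
    have hjA : HasDerivAt Pt (Φ₀ Apt) Apt := by
      have hleft : HasDerivWithinAt Pt (Φ₀ Apt) (Set.Iic Apt) Apt := by
        have heq : ∀ x ∈ Set.Iic Apt, Pt x = P Apt + Φ₀ Apt * (x - Apt) := by
          intro x hx
          rcases lt_or_eq_of_le (Set.mem_Iic.1 hx) with h' | h'
          · simp only [hPtdef]; rw [if_pos h']
          · rw [h']
            simp only [hPtdef]; rw [if_neg (lt_irrefl Apt), if_pos hABlt.le]; ring
        exact ((hlinA Apt).hasDerivWithinAt).congr heq (heq Apt (le_refl Apt))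
      have hright : HasDerivWithinAt Pt (Φ₀ Apt) (Set.Ici Apt) Apt := by
        have h2 := (hPJ Apt hAJ).hasDerivWithinAt (s := Set.Ici Apt)
        refine h2.congr_of_eventuallyEq ?_ ?_
        · filter_upwards [nhdsWithin_le_nhds (Iio_mem_nhds hABlt),
            self_mem_nhdsWithin] with x hx1 hx2
          have hx2' : Apt ≤ x := Set.mem_Ici.1 hx2
          have hx1' : x < Bpt := Set.mem_Iio.1 hx1
          simp only [hPtdef]; rw [if_neg (not_lt.2 hx2'), if_pos hx1'.le]
        · simp only [hPtdef]; rw [if_neg (lt_irrefl Apt), if_pos hABlt.le]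
      have hu := hleft.union hright
      rw [Set.Iic_union_Ici] at hu
      exact hasDerivWithinAt_univ.1 hu
    have hjB : HasDerivAt Pt (Φ₀ Bpt) Bpt := by
      have hleft : HasDerivWithinAt Pt (Φ₀ Bpt) (Set.Iic Bpt) Bpt := by
        have h3 := (hPJ Bpt hBJ).hasDerivWithinAt (s := Set.Iic Bpt)
        refine h3.congr_of_eventuallyEq ?_ ?_
        · filter_upwards [nhdsWithin_le_nhds (Ioi_mem_nhds hABlt),
            self_mem_nhdsWithin] with x hx1 hx2
          have hx1' : Apt < x := Set.mem_Ioi.1 hx1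
          have hx2' : x ≤ Bpt := Set.mem_Iic.1 hx2
          simp only [hPtdef]; rw [if_neg (not_lt.2 hx1'.le), if_pos hx2']
        · simp only [hPtdef]; rw [if_neg (not_lt.2 hABlt.le), if_pos (le_refl Bpt)]
      have hright : HasDerivWithinAt Pt (Φ₀ Bpt) (Set.Ici Bpt) Bpt := by
        have heq : ∀ x ∈ Set.Ici Bpt, Pt x = P Bpt + Φ₀ Bpt * (x - Bpt) := by
          intro x hx
          rcases lt_or_eq_of_le (Set.mem_Ici.1 hx) with h' | h'
          · simp only [hPtdef]
            rw [if_neg (not_lt.2 (hABlt.trans h').le), if_neg (not_le.2 h')]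
          · rw [← h']
            simp only [hPtdef]; rw [if_neg (not_lt.2 hABlt.le), if_pos (le_refl Bpt)]; ring
        exact ((hlinB Bpt).hasDerivWithinAt).congr heq (heq Bpt (le_refl Bpt))
      have hu := hleft.union hright
      rw [Set.Iic_union_Ici] at hu
      exact hasDerivWithinAt_univ.1 hu
    intro u
    rcases lt_trichotomy u Apt with h | h | h
    · have he : Pht u = Φ₀ Apt := by simp only [hPhtdef]; rw [if_pos h]
      rw [he]
      refine (hlinA u).congr_of_eventuallyEq ?_
      filter_upwards [Iio_mem_nhds h] with x hx
      simp only [hPtdef]; rw [if_pos (Set.mem_Iio.1 hx)]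
    · have he : Pht u = Φ₀ Apt := by
        rw [h]; simp only [hPhtdef]; rw [if_neg (lt_irrefl Apt), if_pos hABlt.le]
      rw [he, h]
      exact hjA
    · rcases lt_trichotomy u Bpt with h2 | h2 | h2
      · have he : Pht u = Φ₀ u := by
          simp only [hPhtdef]; rw [if_neg (not_lt.2 h.le), if_pos h2.le]
        rw [he]
        refine (hPJ u (hIccJ ⟨h.le, h2.le⟩)).congr_of_eventuallyEq ?_
        filter_upwards [Ioo_mem_nhds h h2] with x hx
        simp only [hPtdef]; rw [if_neg (not_lt.2 hx.1.le), if_pos hx.2.le]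
      · have he : Pht u = Φ₀ Bpt := by
          rw [h2]; simp only [hPhtdef]
          rw [if_neg (not_lt.2 hABlt.le), if_pos (le_refl Bpt)]
        rw [he, h2]
        exact hjB
      · have he : Pht u = Φ₀ Bpt := by
          simp only [hPhtdef]
          rw [if_neg (not_lt.2 (hABlt.trans h2).le), if_neg (not_le.2 h2)]
        rw [he]
        refine (hlinB u).congr_of_eventuallyEq ?_
        filter_upwards [Ioi_mem_nhds h2] with x hx
        simp only [hPtdef]
        rw [if_neg (not_lt.2 (hABlt.trans (Set.mem_Ioi.1 hx)).le), if_neg (not_le.2 (Set.mem_Ioi.1 hx))]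
  have hPtc : Continuous Pt := by
    rw [continuous_iff_continuousAt]
    exact fun u => (hPt u).continuousAt
  have hPhtbd : ∀ u : ℝ, |Pht u| ≤ M := by
    intro u
    rcases lt_trichotomy u Apt with h | h | h
    · simp only [hPhtdef]; rw [if_pos h]
      exact hMI Apt ⟨le_refl _, hABlt.le⟩
    · rw [h]
      simp only [hPhtdef]; rw [if_neg (lt_irrefl Apt), if_pos hABlt.le]
      exact hMI Apt ⟨le_refl _, hABlt.le⟩
    · rcases le_or_gt u Bpt with h2 | h2
      · simp only [hPhtdef]; rw [if_neg (not_lt.2 h.le), if_pos h2]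
        exact hMI u ⟨h.le, h2⟩
      · simp only [hPhtdef]; rw [if_neg (not_lt.2 (hABlt.trans h2).le), if_neg (not_le.2 h2)]
        exact hMI Bpt ⟨hABlt.le, le_refl _⟩
  have hPhtr : ∀ θ ∈ Set.Icc θ₁ θ₂, Pht (r₁ θ) = Φ₀ (r₁ θ) := by
    intro θ hθ
    have hx := hrange θ hθ
    simp only [hPhtdef]; rw [if_neg (not_lt.2 hx.1), if_pos hx.2]
  set Ψ₂ : ℝ → ℝ := fun s => ∫ θ in θ₁..θ₂,
      (Real.tan θ ^ 2 * w θ) * Pt (r₁ θ + s * w θ) with hΨ₂def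
  have hΨ₂d : HasDerivAt Ψ₂ (∫ θ in θ₁..θ₂,
      (Real.tan θ ^ 2 * w θ) * (Pht (r₁ θ + 0 * w θ) * w θ)) 0 := by
    rw [hΨ₂def]
    refine param_deriv hθ₁₂ hδ₀ ((cont_tan.pow 2).mul cont_w) cont_w
      (fun θ _ s _ => hPt _) (fun θ _ s _ => hPhtbd _)
      (fun s _ => hPtc.comp_continuousOn (cont_inner s))
      (by simpa using hδ₀)
      ?_
    refine ContinuousOn.congr contPhi fun θ hθ => ?_
    simp only [zero_mul, add_zero]
    exact hPhtr θ hθ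
  -- integrands are continuous, hence integrable, for small `s`
  have hint1 : ∀ s : ℝ, |s| < δ₀ → IntervalIntegrable
      (fun θ => Real.tan θ ^ 2 * (P (r₁ θ + s * w θ) * w θ)) volume θ₁ θ₂ := by
    intro s hs
    apply ContinuousOn.intervalIntegrable
    rw [huIcc]
    exact (cont_tan.pow 2).mul
      ((hPc.comp (cont_inner s) (fun θ hθ => hinJ θ hθ s hs)).mul cont_w)
  have hint2 : ∀ s : ℝ, IntervalIntegrable
      (fun θ => (Real.tan θ ^ 2 * w θ) * Pt (r₁ θ + s * w θ)) volume θ₁ θ₂ := by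
    intro s
    apply ContinuousOn.intervalIntegrable
    rw [huIcc]
    exact ((cont_tan.pow 2).mul cont_w).mul (hPtc.comp_continuousOn (cont_inner s))
  -- the error term has vanishing derivative at 0
  have hPt0 : ∀ θ ∈ Set.Icc θ₁ θ₂, Pt (r₁ θ) = P (r₁ θ) := fun θ hθ => hPtA _ (hrange θ hθ)
  have hE0 : Ψ 0 - Ψ₂ 0 = 0 := by
    have : Ψ 0 = Ψ₂ 0 := by
      refine intervalIntegral.integral_congr fun θ hθ => ?_
      rw [huIcc] at hθ
      simp only [zero_mul, add_zero]
      rw [hPt0 θ hθ]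
      ring
    rw [this, sub_self]
  have hEd : HasDerivAt (fun s => Ψ s - Ψ₂ s) 0 0 := by
    rw [hasDerivAt_iff_isLittleO, Asymptotics.isLittleO_iff]
    intro c hc
    set D : ℝ := Cb * Cw * |θ₂ - θ₁| + 1 with hDdef
    have hD1 : 1 ≤ D := by
      have : 0 ≤ Cb * Cw * |θ₂ - θ₁| := by positivity
      simp only [hDdef]; linarith
    have hDpos : 0 < D := lt_of_lt_of_le one_pos hD1
    set c' : ℝ := c / D with hc'def
    have hc' : 0 < c' := div_pos hc hDpos
    -- little-o control of P near Apt and Bpt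
    have haux : ∀ (y : ℝ), y ∈ J → ∃ δ > 0, ∀ u : ℝ, |u - y| ≤ δ →
        |P u - P y - Φ₀ y * (u - y)| ≤ c' * |u - y| := by
      intro y hy
      have h1 := (hasDerivAt_iff_isLittleO.1 (hPJ y hy))
      have h2 := (Asymptotics.isLittleO_iff.1 h1) hc'
      rw [Metric.eventually_nhds_iff] at h2
      obtain ⟨δ, hδpos, hδ⟩ := h2
      refine ⟨δ / 2, half_pos hδpos, fun u hu => ?_⟩
      have hu' : dist u y < δ := by
        rw [Real.dist_eq]; linarith
      have := hδ hu'
      simpa [Real.norm_eq_abs, smul_eq_mul, mul_comm, abs_sub_comm,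
        sub_sub_eq_add_sub] using this
    obtain ⟨δA, hδApos, hδA⟩ := haux Apt hAJ
    obtain ⟨δB, hδBpos, hδB⟩ := haux Bpt hBJ
    set η : ℝ := min δ₀ (min (δA / (Cw + 1)) (δB / (Cw + 1))) with hηdef
    have hηpos : 0 < η := by
      apply lt_min hδ₀
      exact lt_min (div_pos hδApos (by linarith)) (div_pos hδBpos (by linarith))
    -- the key pointwise estimate
    have hkey : ∀ s : ℝ, |s| < η → ∀ θ ∈ Set.Icc θ₁ θ₂,
        |P (r₁ θ + s * w θ) - Pt (r₁ θ + s * w θ)| ≤ c' * (Cw * |s|) := by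
      intro s hs θ hθ
      have hsw : |s * w θ| ≤ Cw * |s| := by
        rw [abs_mul, mul_comm]
        exact mul_le_mul_of_nonneg_right (hCw θ hθ) (abs_nonneg _)
      have hswA : Cw * |s| ≤ δA := by
        have hs' : |s| ≤ δA / (Cw + 1) :=
          le_of_lt (lt_of_lt_of_le hs (le_trans (min_le_right _ _) (min_le_left _ _)))
        rw [le_div_iff₀ (by linarith : (0:ℝ) < Cw + 1)] at hs'
        nlinarith [abs_nonneg s]
      have hswB : Cw * |s| ≤ δB := by
        have hs' : |s| ≤ δB / (Cw + 1) :=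
          le_of_lt (lt_of_lt_of_le hs (le_trans (min_le_right _ _) (min_le_right _ _)))
        rw [le_div_iff₀ (by linarith : (0:ℝ) < Cw + 1)] at hs'
        nlinarith [abs_nonneg s]
      set u : ℝ := r₁ θ + s * w θ with hudef
      have hru := hrange θ hθ
      rcases lt_trichotomy u Apt with h | h | h
      · -- below Apt
        have hPtu : Pt u = P Apt + Φ₀ Apt * (u - Apt) := by
          simp only [hPtdef]; rw [if_pos h]
        have hdist : |u - Apt| ≤ Cw * |s| := by
          have h1 : Apt ≤ r₁ θ := hru.1
          have h2 : u - r₁ θ = s * w θ := by rw [hudef]; ring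
          have h3 : |u - Apt| = Apt - u := by
            rw [abs_of_neg (by linarith : u - Apt < 0)]; ring
          have h4 : Apt - u ≤ r₁ θ - u := by linarith
          have h5 : r₁ θ - u ≤ |s * w θ| := by
            have := neg_abs_le (s * w θ)
            linarith [h2 ▸ this]
          linarith
        have := hδA u (le_trans hdist hswA)
        rw [hPtu]
        calc |P u - (P Apt + Φ₀ Apt * (u - Apt))|
            = |P u - P Apt - Φ₀ Apt * (u - Apt)| := by ring_nf
          _ ≤ c' * |u - Apt| := this
          _ ≤ c' * (Cw * |s|) := mul_le_mul_of_nonneg_left hdist hc'.le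
      · -- inside [Apt, Bpt] (u = Apt)
        have hPtu : Pt u = P u := hPtA u ⟨h.ge, by rw [h]; exact hABlt.le⟩
        rw [hPtu, sub_self, abs_zero]
        positivity
      · rcases le_or_gt u Bpt with h2 | h2
        · have hPtu : Pt u = P u := hPtA u ⟨h.le, h2⟩
          rw [hPtu, sub_self, abs_zero]
          positivity
        · -- above Bpt
          have hPtu : Pt u = P Bpt + Φ₀ Bpt * (u - Bpt) := by
            simp only [hPtdef]
            rw [if_neg (not_lt.2 (hABlt.trans h2).le), if_neg (not_le.2 h2)]
          have hdist : |u - Bpt| ≤ Cw * |s| := by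
            have h1 : r₁ θ ≤ Bpt := hru.2
            have h3 : |u - Bpt| = u - Bpt := abs_of_pos (by linarith)
            have h5 : u - r₁ θ ≤ |s * w θ| := by
              have h2' : u - r₁ θ = s * w θ := by rw [hudef]; ring
              rw [h2']; exact le_abs_self _
            linarith
          have := hδB u (le_trans hdist hswB)
          rw [hPtu]
          calc |P u - (P Bpt + Φ₀ Bpt * (u - Bpt))|
              = |P u - P Bpt - Φ₀ Bpt * (u - Bpt)| := by ring_nf
            _ ≤ c' * |u - Bpt| := this
            _ ≤ c' * (Cw * |s|) := mul_le_mul_of_nonneg_left hdist hc'.le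
    filter_upwards [ball_mem_nhds (0:ℝ) hηpos] with s hs
    have hs' : |s| < η := by simpa [Real.dist_eq] using hs
    have hs0 : |s| < δ₀ := lt_of_lt_of_le hs' (min_le_left _ _)
    have hdiffint : Ψ s - Ψ₂ s = ∫ θ in θ₁..θ₂,
        (Real.tan θ ^ 2 * (P (r₁ θ + s * w θ) * w θ)
          - (Real.tan θ ^ 2 * w θ) * Pt (r₁ θ + s * w θ)) := by
      rw [hΨdef, hΨ₂def]
      exact (intervalIntegral.integral_sub (hint1 s hs0) (hint2 s)).symm
    have hbound : ∀ θ ∈ Ι θ₁ θ₂,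
        ‖Real.tan θ ^ 2 * (P (r₁ θ + s * w θ) * w θ)
          - (Real.tan θ ^ 2 * w θ) * Pt (r₁ θ + s * w θ)‖ ≤ Cb * (c' * (Cw * |s|)) := by
      intro θ hθ
      have hθ' : θ ∈ Set.Icc θ₁ θ₂ := by
        rw [uIoc_of_le hab] at hθ; exact Set.Ioc_subset_Icc_self hθ
      have heq : Real.tan θ ^ 2 * (P (r₁ θ + s * w θ) * w θ)
          - (Real.tan θ ^ 2 * w θ) * Pt (r₁ θ + s * w θ)
          = (Real.tan θ ^ 2 * w θ) * (P (r₁ θ + s * w θ) - Pt (r₁ θ + s * w θ)) := by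
        ring
      rw [heq, Real.norm_eq_abs, abs_mul]
      exact mul_le_mul (hCb θ hθ') (hkey s hs' θ hθ') (abs_nonneg _) hCb0
    have hnorm := intervalIntegral.norm_integral_le_of_norm_le_const hbound
    rw [← hdiffint] at hnorm
    have hfinal : |Ψ s - Ψ₂ s| ≤ c * |s| := by
      have h1 : Cb * (c' * (Cw * |s|)) * |θ₂ - θ₁| = c' * (Cb * Cw * |θ₂ - θ₁|) * |s| := by
        ring
      have h2 : c' * (Cb * Cw * |θ₂ - θ₁|) ≤ c := by
        rw [hc'def, div_mul_eq_mul_div, div_le_iff₀ hDpos]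
        have : Cb * Cw * |θ₂ - θ₁| ≤ D := by
          simp only [hDdef]; linarith
        nlinarith
      have h3 : c' * (Cb * Cw * |θ₂ - θ₁|) * |s| ≤ c * |s| :=
        mul_le_mul_of_nonneg_right h2 (abs_nonneg _)
      rw [Real.norm_eq_abs] at hnorm
      linarith [h1 ▸ hnorm]
    simp only [hE0, sub_zero, sub_zero, smul_eq_mul, mul_zero, Real.norm_eq_abs]
    simpa using hfinal
  -- the second variation
  have hΨeq : Ψ = fun s => Ψ₂ s + (Ψ s - Ψ₂ s) := by
    funext s; ring
  have hΨd : HasDerivAt Ψ ((∫ θ in θ₁..θ₂,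
      (Real.tan θ ^ 2 * w θ) * (Pht (r₁ θ + 0 * w θ) * w θ)) + 0) 0 := by
    rw [hΨeq]
    exact hΨ₂d.add hEd
  have hval2 : (∫ θ in θ₁..θ₂, (Real.tan θ ^ 2 * w θ) * (Pht (r₁ θ + 0 * w θ) * w θ)) + 0
      = ∫ θ in θ₁..θ₂, Φ₀ (r₁ θ) * (Real.tan θ * v θ + v' θ) ^ 2 := by
    rw [add_zero]
    refine intervalIntegral.integral_congr fun θ hθ => ?_
    rw [huIcc] at hθ
    have h1 : Pht (r₁ θ + 0 * w θ) = Φ₀ (r₁ θ) := by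
      rw [zero_mul, add_zero]; exact hPhtr θ hθ
    rw [h1]
    have h2 : Real.tan θ * w θ = Real.tan θ * v θ + v' θ := by
      have h3 := htc θ hθ
      simp only [hwdef]
      linear_combination v' θ * h3
    have h4 : (Real.tan θ ^ 2 * w θ) * (Φ₀ (r₁ θ) * w θ)
        = Φ₀ (r₁ θ) * (Real.tan θ * w θ) ^ 2 := by ring
    rw [h4, h2]
  -- first conjunct
  have hconj1 : deriv (deriv (fun ε => ∫ θ in θ₁..θ₂,
      Real.tan θ ^ 2 * Q ((rs' θ + ε * v' θ) * Real.cot θ + (rs θ + ε * v θ)))) 0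
      = ∫ θ in θ₁..θ₂, Φ₀ (r₁ θ) * (Real.tan θ * v θ + v' θ) ^ 2 := by
    rw [hfeq, hev.deriv_eq, hΨd.deriv, hval2]
  -- positivity
  have hGcont : ContinuousOn (fun θ => Φ₀ (r₁ θ) * (Real.tan θ * v θ + v' θ) ^ 2)
      (Set.Icc θ₁ θ₂) := by
    exact contPhi.mul (((cont_tan.mul cont_v).add hv').pow 2)
  have hGnonneg : ∀ θ ∈ Set.Icc θ₁ θ₂, 0 ≤ Φ₀ (r₁ θ) * (Real.tan θ * v θ + v' θ) ^ 2 :=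
    fun θ hθ => mul_nonneg (hphp θ hθ).le (sq_nonneg _)
  -- there is a point where the integrand is positive
  have hex : ∃ θ₀ ∈ Set.Icc θ₁ θ₂, Real.tan θ₀ * v θ₀ + v' θ₀ ≠ 0 := by
    by_contra hcon
    push_neg at hcon
    -- then v/cos is constant, hence v ≡ 0
    obtain ⟨θv, hθv, hvθv⟩ := hvne
    apply hvθv
    have hhd : ∀ θ ∈ Set.Icc θ₁ θ₂,
        HasDerivWithinAt (fun x => v x / Real.cos x) 0 (Set.Icc θ₁ θ₂) θ := by
      intro θ hθ
      have hc0 := (hcos θ hθ).ne'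
      have hd := (hv θ hθ).div ((Real.hasDerivAt_cos θ).hasDerivWithinAt) hc0
      have hval : (v' θ * Real.cos θ - v θ * -Real.sin θ) / Real.cos θ ^ 2 = 0 := by
        have h5 : v' θ * Real.cos θ - v θ * -Real.sin θ
            = Real.cos θ * (Real.tan θ * v θ + v' θ) := by
          rw [Real.tan_eq_sin_div_cos]
          field_simp
          ring
        rw [h5, hcon θ hθ, mul_zero, zero_div]
      rw [hval] at hd
      exact hd
    have hconst : ∀ x ∈ Set.Icc θ₁ θ₂, v x / Real.cos x = v θ₁ / Real.cos θ₁ := by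
      apply constant_of_derivWithin_zero
      · intro x hx
        exact (hhd x hx).differentiableWithinAt
      · intro x hx
        have hx' : x ∈ Set.Icc θ₁ θ₂ := Set.mem_Icc_of_Ico hx
        exact (hhd x hx').derivWithin (uniqueDiffOn_Icc hθ₁₂ x hx')
    have h6 := hconst θv hθv
    rw [hv1, zero_div] at h6
    have hc0 := (hcos θv hθv).ne'
    field_simp at h6
    simpa using h6
  obtain ⟨θ₀, hθ₀, hθ₀ne⟩ := hex
  have hG0 : 0 < Φ₀ (r₁ θ₀) * (Real.tan θ₀ * v θ₀ + v' θ₀) ^ 2 :=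
    mul_pos (hphp θ₀ hθ₀) (by positivity)
  have hconj2 : 0 < ∫ θ in θ₁..θ₂, Φ₀ (r₁ θ) * (Real.tan θ * v θ + v' θ) ^ 2 := by
    set G : ℝ → ℝ := fun θ => Φ₀ (r₁ θ) * (Real.tan θ * v θ + v' θ) ^ 2 with hGdef
    -- find an interior interval where G is positive
    have hcw : ContinuousWithinAt G (Set.Icc θ₁ θ₂) θ₀ := hGcont θ₀ hθ₀
    have hev2 : ∀ᶠ x in 𝓝[Set.Icc θ₁ θ₂] θ₀, 0 < G x :=
      hcw.eventually (eventually_gt_nhds hG0)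
    rw [eventually_nhdsWithin_iff] at hev2
    rw [Metric.eventually_nhds_iff] at hev2
    obtain ⟨ε, hεpos, hε⟩ := hev2
    set α : ℝ := max θ₁ (θ₀ - ε / 2) with hαdef
    set β : ℝ := min θ₂ (θ₀ + ε / 2) with hβdef
    have hαβ : α < β := by
      have h1 := hθ₀.1; have h2 := hθ₀.2
      apply max_lt <;> apply lt_min <;> linarith
    have hsubset : Set.Ioo α β ⊆ Function.support G ∩ Set.Ioc θ₁ θ₂ := by
      intro x hx
      have hx1 : θ₁ < x := lt_of_le_of_lt (le_max_left _ _) hx.1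
      have hx2 : x ≤ θ₂ := le_of_lt (lt_of_lt_of_le hx.2 (min_le_left _ _))
      have hxI : x ∈ Set.Icc θ₁ θ₂ := ⟨hx1.le, hx2⟩
      have hxd : dist x θ₀ < ε := by
        rw [Real.dist_eq, abs_sub_lt_iff]
        constructor
        · have := lt_of_lt_of_le hx.2 (min_le_right _ _); linarith
        · have := lt_of_le_of_lt (le_max_right _ _) hx.1; linarith
      have := hε hxd hxI
      exact ⟨ne_of_gt this, hx1, hx2⟩
    have hGint : IntegrableOn G (Set.Ioc θ₁ θ₂) volume := by
      have hGc' : ContinuousOn G (Set.uIcc θ₁ θ₂) := by rw [huIcc]; exact hGcont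
      have := hGc'.intervalIntegrable (μ := volume)
      rwa [intervalIntegrable_iff_integrableOn_Ioc_of_le hab] at this
    have hGae : 0 ≤ᵐ[volume.restrict (Set.Ioc θ₁ θ₂)] G := by
      rw [EventuallyLE, ae_restrict_iff' measurableSet_Ioc]
      exact ae_of_all _ fun θ hθ => hGnonneg θ (Set.Ioc_subset_Icc_self hθ)
    rw [intervalIntegral.integral_of_le hab]
    rw [MeasureTheory.setIntegral_pos_iff_support_of_nonneg_ae hGae hGint]
    calc (0:ENNReal) < volume (Set.Ioo α β) := by
          rw [Real.volume_Ioo]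
          exact ENNReal.ofReal_pos.2 (by linarith)
      _ ≤ volume (Function.support G ∩ Set.Ioc θ₁ θ₂) := measure_mono hsubset
  exact ⟨hconj1, hconj2⟩
end
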